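/- arXiv:1702.06256 — 9 statements merged into one kernel-verified Lean document; each statement's English description precedes it below -/
import Mathlib

section
/- Two distinct vertices (i,j) and (h,l) are conflicting if and only if there exists p ∈ {-1,0,1} (as integers) such that (h = i + p and l ≠ j + p) or (l = j + p and h ≠ i + p). -/
/-
Whether some fibre-preserving permutation `π` (one with `A = B ∘ π`) sends prescribed points
to prescribed points is decided by the prescriptions alone: as long as they form a partial
bijection compatible with the fibres, start from any fibre-preserving `π₀` and correct it one
prescription at a time by composing with a transposition inside a fibre. For the four
prescriptions `i ↦ j`, `i+1 ↦ j+1`, `h ↦ l`, `h+1 ↦ l+1` of two vertices, being a partial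
bijection is the arithmetic condition `h = i + p ↔ l = j + p` for `p ∈ {-1, 0, 1}`.
-/

/-- `(i, j)` is a vertex: `A i = B j` and `A (i+1) = B (j+1)`,
with the required index bounds (`i, j ≤ n - 2`, i.e. `i + 1 < n` and `j + 1 < n`). -/
def IsVertex {Γ : Type*} (n : ℕ) (A B : Fin n → Γ) (i j : ℕ) : Prop :=
  ∃ (hi : i + 1 < n) (hj : j + 1 < n),
    A ⟨i, Nat.lt_of_succ_lt hi⟩ = B ⟨j, Nat.lt_of_succ_lt hj⟩ ∧
    A ⟨i + 1, hi⟩ = B ⟨j + 1, hj⟩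

namespace Equiv.Perm

variable {α Γ : Type*} [DecidableEq α] {A B : α → Γ}

lemma forall_apply_eq_apply_mul_swap_inv {π : Perm α} (hπ : ∀ x, A x = B (π x)) {a b : α}
    (hab : A a = B b) (x : α) : A x = B ((π * swap a (π⁻¹ b)) x) := by
  rw [mul_apply]
  rcases eq_or_ne x a with rfl | hxa
  · simpa using hab
  rcases eq_or_ne x (π⁻¹ b) with rfl | hxb
  · rw [swap_apply_right, ← hπ a, hab]
    simpa using hπ (π⁻¹ b)
  · rw [swap_apply_of_ne_of_ne hxa hxb, hπ]

lemma mul_swap_inv_apply_of_ne (π : Perm α) {a b x : α} (hxa : x ≠ a) (hxb : π x ≠ b) :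
    (π * swap a (π⁻¹ b)) x = π x := by
  rw [mul_apply, swap_apply_of_ne_of_ne hxa (by rwa [Ne, eq_inv_iff_eq])]

end Equiv.Perm

open Equiv Equiv.Perm in
theorem exists_perm_forall_mem_apply_eq_iff {α Γ : Type*} {A B : α → Γ}
    {π₀ : Perm α} (hπ₀ : ∀ x, A x = B (π₀ x)) {R : Finset (α × α)}
    (hR : ∀ p ∈ R, A p.1 = B p.2) :
    (∃ π : Perm α, (∀ x, A x = B (π x)) ∧ ∀ p ∈ R, π p.1 = p.2) ↔
      ∀ p ∈ R, ∀ q ∈ R, (p.1 = q.1 ↔ p.2 = q.2) := by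
  classical
  constructor
  · rintro ⟨π, -, hπR⟩ p hp q hq
    rw [← hπR p hp, ← hπR q hq, π.injective.eq_iff]
  induction R using Finset.induction_on with
  | empty => exact fun _ => ⟨π₀, hπ₀, by simp⟩
  | insert r R _ ih =>
    intro hbij
    simp only [Finset.mem_insert, forall_eq_or_imp] at hR hbij
    obtain ⟨π, hπ, hπR⟩ := ih hR.2 fun p hp q hq => hbij.2 p hp |>.2 q hq
    refine ⟨π * swap r.1 (π⁻¹ r.2), forall_apply_eq_apply_mul_swap_inv hπ hR.1, ?_⟩
    simp only [Finset.mem_insert, forall_eq_or_imp]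
    refine ⟨by simp, fun p hp => ?_⟩
    by_cases hpr : p.1 = r.1
    · simp [hpr, (hbij.1.2 p hp).1 hpr.symm]
    · have hπp : π p.1 ≠ r.2 := by
        rw [hπR p hp]
        exact fun h => hpr ((hbij.1.2 p hp).2 h.symm).symm
      rw [mul_swap_inv_apply_of_ne π hpr hπp, hπR p hp]

theorem stmt_3_general {Γ : Type*} (n : ℕ) (A B : Fin n → Γ)
    (σ : Equiv.Perm (Fin n)) (hB : B = A ∘ σ)
    (i j h l : ℕ) (hi : i + 1 < n) (hj : j + 1 < n) (hh : h + 1 < n) (hl : l + 1 < n)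
    (hij : IsVertex n A B i j) (hhl : IsVertex n A B h l) :
    (¬ ∃ π : Equiv.Perm (Fin n),
        (∀ x, A x = B (π x)) ∧
        π ⟨i, Nat.lt_of_succ_lt hi⟩ = ⟨j, Nat.lt_of_succ_lt hj⟩ ∧
        π ⟨i + 1, hi⟩ = ⟨j + 1, hj⟩ ∧
        π ⟨h, Nat.lt_of_succ_lt hh⟩ = ⟨l, Nat.lt_of_succ_lt hl⟩ ∧
        π ⟨h + 1, hh⟩ = ⟨l + 1, hl⟩)
      ↔
    (∃ p : ℤ, (p = -1 ∨ p = 0 ∨ p = 1) ∧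
      (((h : ℤ) = (i : ℤ) + p ∧ (l : ℤ) ≠ (j : ℤ) + p) ∨
       ((l : ℤ) = (j : ℤ) + p ∧ (h : ℤ) ≠ (i : ℤ) + p))) := by
  obtain ⟨_, _, hij₀, hij₁⟩ := hij
  obtain ⟨_, _, hhl₀, hhl₁⟩ := hhl
  have hσ : ∀ x, A x = B (σ.symm x) := by simp [hB]
  have hextend := exists_perm_forall_mem_apply_eq_iff hσ
    (R := {(⟨i, Nat.lt_of_succ_lt hi⟩, ⟨j, Nat.lt_of_succ_lt hj⟩), (⟨i + 1, hi⟩, ⟨j + 1, hj⟩),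
      (⟨h, Nat.lt_of_succ_lt hh⟩, ⟨l, Nat.lt_of_succ_lt hl⟩), (⟨h + 1, hh⟩, ⟨l + 1, hl⟩)})
    (by simp [hij₀, hij₁, hhl₀, hhl₁])
  simp only [Finset.mem_insert, Finset.mem_singleton, forall_eq_or_imp, forall_eq,
    and_assoc, Fin.mk.injEq] at hextend
  rw [hextend]
  simp only [or_and_right, exists_or, exists_eq_left]
  grind

theorem stmt_3 {Γ : Type*} (n : ℕ) (hn : 2 ≤ n) (A B : Fin n → Γ)
    (σ : Equiv.Perm (Fin n)) (hB : B = A ∘ σ)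
    (i j h l : ℕ) (hi : i + 1 < n) (hj : j + 1 < n) (hh : h + 1 < n) (hl : l + 1 < n)
    (hij : IsVertex n A B i j) (hhl : IsVertex n A B h l)
    (hne : (i, j) ≠ (h, l)) :
    (¬ ∃ π : Equiv.Perm (Fin n),
        (∀ x, A x = B (π x)) ∧
        π ⟨i, Nat.lt_of_succ_lt hi⟩ = ⟨j, Nat.lt_of_succ_lt hj⟩ ∧
        π ⟨i + 1, hi⟩ = ⟨j + 1, hj⟩ ∧
        π ⟨h, Nat.lt_of_succ_lt hh⟩ = ⟨l, Nat.lt_of_succ_lt hl⟩ ∧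
        π ⟨h + 1, hh⟩ = ⟨l + 1, hl⟩)
      ↔
    (∃ p : ℤ, (p = -1 ∨ p = 0 ∨ p = 1) ∧
      (((h : ℤ) = (i : ℤ) + p ∧ (l : ℤ) ≠ (j : ℤ) + p) ∨
       ((l : ℤ) = (j : ℤ) + p ∧ (h : ℤ) ≠ (i : ℤ) + p))) :=
  stmt_3_general n A B σ hB i j h l hi hj hh hl hij hhl
end

section
/- If every letter occurs at most k times in A, then every vertex of the conflict graph G has degree at most 6(k-1), i.e., for every vertex v, |N(v)| ≤ 6(k-1). -/
/-- Adjacency in the conflict graph `G`: two distinct vertices `(i,j)` and `(h,l)`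
are adjacent iff there is `p ∈ {-1, 0, 1}` with
(`h = i + p` and `l ≠ j + p`) or (`l = j + p` and `h ≠ i + p`). -/
def ConflictAdj {Γ : Type*} (n : ℕ) (A B : Fin n → Γ) (v w : ℕ × ℕ) : Prop :=
  IsVertex n A B v.1 v.2 ∧ IsVertex n A B w.1 w.2 ∧ v ≠ w ∧
  ∃ p : ℤ, (p = -1 ∨ p = 0 ∨ p = 1) ∧
    (((w.1 : ℤ) = (v.1 : ℤ) + p ∧ (w.2 : ℤ) ≠ (v.2 : ℤ) + p) ∨
     ((w.2 : ℤ) = (v.2 : ℤ) + p ∧ (w.1 : ℤ) ≠ (v.1 : ℤ) + p))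

/-!
A neighbour `w` of the vertex `v = (i, j)` lies in row `i + p` or column `j + p` for some
`p ∈ {-1, 0, 1}`, off the diagonal through `v`. In row `i + p`, write `i + p + e = i + e'` with
`e, e' ∈ {0, 1}`: then `B (w.2 + e) = A (i + e') = B (j + e')` with `w.2 + e ≠ j + e'`, and `w` is
determined by `w.2`, so the row holds at most `k - 1` neighbours. Columns are rows after swapping
`A` and `B`, which gives `6 (k - 1)` in total.
-/

section ConflictGraph

variable {Γ : Type*} {n k : ℕ} {A B : Fin n → Γ}

lemma ncard_fiber_comp_perm (A : Fin n → Γ) (σ : Equiv.Perm (Fin n)) (c : Γ) :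
    {x | (A ∘ σ) x = c}.ncard = {x | A x = c}.ncard :=
  Set.ncard_preimage_of_injective_subset_range (s := {x | A x = c}) σ.injective
    (by simp [σ.surjective.range_eq])

lemma ncard_other_occurrences_le (f : Fin n → Γ) (hf : ∀ c, {x | f x = c}.ncard ≤ k)
    (m₀ : Fin n) :
    {m : ℕ | ∃ h : m < n, f ⟨m, h⟩ = f m₀ ∧ m ≠ m₀}.ncard ≤ k - 1 := by
  have hset : {m : ℕ | ∃ h : m < n, f ⟨m, h⟩ = f m₀ ∧ m ≠ m₀} =
      Fin.val '' ({x | f x = f m₀} \ {m₀}) := by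
    ext m
    constructor
    · rintro ⟨hm, hfm, hne⟩
      exact ⟨⟨m, hm⟩, ⟨hfm, fun h => hne (congrArg Fin.val h)⟩, rfl⟩
    · rintro ⟨x, ⟨hfx, hne⟩, rfl⟩
      exact ⟨x.isLt, hfx, fun h => hne (Fin.ext h)⟩
  rw [hset, Set.ncard_image_of_injective _ Fin.val_injective,
    Set.ncard_sdiff_singleton_of_mem (s := {x | f x = f m₀}) rfl]
  exact Nat.sub_le_sub_right (hf _) 1

lemma isVertex_comm {i j : ℕ} : IsVertex n B A j i ↔ IsVertex n A B i j := by
  simp only [IsVertex, eq_comm (a := B _)]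
  exact ⟨fun ⟨hj, hi, h⟩ => ⟨hi, hj, h⟩, fun ⟨hi, hj, h⟩ => ⟨hj, hi, h⟩⟩

lemma IsVertex.letter_eq {i j : ℕ} (h : IsVertex n A B i j) {e : ℕ} (he : e ≤ 1) :
    ∃ (hi : i + e < n) (hj : j + e < n), A ⟨i + e, hi⟩ = B ⟨j + e, hj⟩ := by
  obtain ⟨hi, hj, h₀, h₁⟩ := h
  interval_cases e
  · exact ⟨by omega, by omega, h₀⟩
  · exact ⟨hi, hj, h₁⟩

/-- The conflicts of `v` of the first kind in `ConflictAdj`, with shift `p`; those of the second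
kind are `Prod.swap ⁻¹' rowConflicts n B A v.swap p`. -/
def rowConflicts (n : ℕ) (A B : Fin n → Γ) (v : ℕ × ℕ) (p : ℤ) : Set (ℕ × ℕ) :=
  {w | IsVertex n A B w.1 w.2 ∧ (w.1 : ℤ) = v.1 + p ∧ (w.2 : ℤ) ≠ v.2 + p}

lemma ncard_rowConflicts_le (hB : ∀ c, {x | B x = c}.ncard ≤ k) {v : ℕ × ℕ}
    (hv : IsVertex n A B v.1 v.2) {p : ℤ} (hp : p ∈ ({-1, 0, 1} : Finset ℤ)) :
    (rowConflicts n A B v p).ncard ≤ k - 1 := by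
  obtain ⟨e, e', he, he', rfl⟩ : ∃ e e' : ℕ, e ≤ 1 ∧ e' ≤ 1 ∧ p = e' - e := by
    simp only [Finset.mem_insert, Finset.mem_singleton] at hp
    rcases hp with rfl | rfl | rfl
    exacts [⟨1, 0, by omega⟩, ⟨0, 0, by omega⟩, ⟨0, 1, by omega⟩]
  obtain ⟨_, hvj, hv_eq⟩ := hv.letter_eq he'
  refine le_trans ?_ (ncard_other_occurrences_le B hB ⟨v.2 + e', hvj⟩)
  refine Set.ncard_le_ncard_of_injOn (fun w => w.2 + e) ?_ ?_ (Set.finite_lt_nat n |>.subset ?_)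
  · rintro w ⟨hw, hrow, hdiag⟩
    obtain ⟨_, hwj, hw_eq⟩ := hw.letter_eq he
    refine ⟨hwj, ?_, by simp only; omega⟩
    rw [← hw_eq, ← hv_eq]
    exact congrArg A (Fin.ext (by simp only; omega))
  · rintro w ⟨-, hrow, -⟩ w' ⟨-, hrow', -⟩ hw
    exact Prod.ext (by omega) (by simpa using hw)
  · exact fun m ⟨hm, _⟩ => hm

lemma setOf_conflictAdj_eq {v : ℕ × ℕ} (hv : IsVertex n A B v.1 v.2) :
    {w | ConflictAdj n A B v w} = ⋃ p ∈ ({-1, 0, 1} : Finset ℤ),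
      (rowConflicts n A B v p ∪ Prod.swap ⁻¹' rowConflicts n B A v.swap p) := by
  ext w
  simp only [ConflictAdj, rowConflicts, Set.mem_ofPred_eq, Set.mem_iUnion, Set.mem_union,
    Set.mem_preimage, Prod.fst_swap, Prod.snd_swap, isVertex_comm, Finset.mem_insert,
    Finset.mem_singleton, exists_prop]
  constructor
  · rintro ⟨-, hw, -, p, hp, hrow | hcol⟩
    exacts [⟨p, hp, Or.inl ⟨hw, hrow⟩⟩, ⟨p, hp, Or.inr ⟨hw, hcol⟩⟩]
  · rintro ⟨p, hp, ⟨hw, hrow⟩ | ⟨hw, hcol⟩⟩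
    · refine ⟨hv, hw, ?_, p, hp, Or.inl hrow⟩
      rintro rfl
      omega
    · refine ⟨hv, hw, ?_, p, hp, Or.inr hcol⟩
      rintro rfl
      omega

end ConflictGraph

theorem stmt_4_general {Γ : Type*} (n : ℕ) (A B : Fin n → Γ)
    (σ : Equiv.Perm (Fin n)) (hB : B = A ∘ σ)
    (k : ℕ) (hk : ∀ c : Γ, {x : Fin n | A x = c}.ncard ≤ k) :
    ∀ v : ℕ × ℕ, IsVertex n A B v.1 v.2 →
      {w : ℕ × ℕ | ConflictAdj n A B v w}.ncard ≤ 6 * (k - 1) := by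
  intro v hv
  have hkB : ∀ c, {x | B x = c}.ncard ≤ k := fun c => by
    rw [hB, ncard_fiber_comp_perm]
    exact hk c
  have hv' : IsVertex n B A v.swap.1 v.swap.2 := isVertex_comm.2 hv
  rw [setOf_conflictAdj_eq hv]
  calc _ ≤ ∑ p ∈ ({-1, 0, 1} : Finset ℤ),
        (rowConflicts n A B v p ∪ Prod.swap ⁻¹' rowConflicts n B A v.swap p).ncard :=
        Finset.set_ncard_biUnion_le _ _
    _ ≤ ∑ p ∈ ({-1, 0, 1} : Finset ℤ), 2 * (k - 1) := Finset.sum_le_sum fun p hp => by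
        refine (Set.ncard_union_le _ _).trans ?_
        rw [Set.ncard_preimage_of_injective_subset_range Prod.swap_injective
          (by simp [Prod.swap_surjective.range_eq])]
        linarith [ncard_rowConflicts_le hkB hv hp, ncard_rowConflicts_le hk hv' hp]
    _ = 6 * (k - 1) := by simp; ring

theorem stmt_4 {Γ : Type*} (n : ℕ) (hn : 2 ≤ n) (A B : Fin n → Γ)
    (σ : Equiv.Perm (Fin n)) (hB : B = A ∘ σ)
    (k : ℕ) (hk : ∀ c : Γ, {x : Fin n | A x = c}.ncard ≤ k) :
    ∀ v : ℕ × ℕ, IsVertex n A B v.1 v.2 →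
      {w : ℕ × ℕ | ConflictAdj n A B v w}.ncard ≤ 6 * (k - 1) :=
  stmt_4_general n A B σ hB k hk
end

section
/- Assume every letter occurs at most 2 times in A. If (i,j) and (i,j') are vertices with j ≠ j', and (i+1, j''+1) is a vertex for some index j'', then j'' = j or j'' = j'. Symmetrically, if (i-1, j''-1) is a vertex for some index j'', then j'' = j or j'' = j'. -/
lemma key_aux {Γ : Type*} {n : ℕ} (A : Fin n → Γ)
    (h2 : ∀ c : Γ, {x : Fin n | A x = c}.ncard ≤ 2)
    {a b e : Fin n} (hab : a ≠ b) (ha : A a = A e) (hb : A b = A e) :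
    e = a ∨ e = b := by
  by_contra h
  push_neg at h
  obtain ⟨h1, h2'⟩ := h
  have hsub : ({a, b, e} : Set (Fin n)) ⊆ {x | A x = A e} := by
    intro x hx
    rcases hx with rfl | rfl | rfl <;> simp_all
  have h3 : ({a, b, e} : Set (Fin n)).ncard = 3 := by
    rw [Set.ncard_eq_three]
    exact ⟨a, b, e, hab, fun h => h1 h.symm, fun h => h2' h.symm, rfl⟩
  have := Set.ncard_le_ncard hsub (Set.toFinite _)
  have := h2 (A e)
  omega

theorem stmt_6 {Γ : Type*} (n : ℕ) (hn : 2 ≤ n) (A B : Fin n → Γ)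
    (σ : Equiv.Perm (Fin n)) (hB : B = A ∘ σ)
    (h2 : ∀ c : Γ, {x : Fin n | A x = c}.ncard ≤ 2)
    (i j j' : ℕ) (hjj' : j ≠ j')
    (hv : IsVertex n A B i j) (hv' : IsVertex n A B i j') :
    (∀ j'' : ℕ, IsVertex n A B (i + 1) (j'' + 1) → j'' = j ∨ j'' = j') ∧
    (∀ i₀ j₀ : ℕ, i₀ + 1 = i → IsVertex n A B i₀ j₀ → j₀ + 1 = j ∨ j₀ + 1 = j') := by
  subst hB
  obtain ⟨hi, hj, hv1, hv2⟩ := hv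
  obtain ⟨hi', hj', hv1', hv2'⟩ := hv'
  simp only [Function.comp_apply] at hv1 hv2 hv1' hv2'
  constructor
  · intro j'' ⟨hi2, hj2, hw1, hw2⟩
    simp only [Function.comp_apply] at hw1 hw2
    -- A (i+1) = A (σ ⟨j+1⟩) = A (σ ⟨j'+1⟩) = A (σ ⟨j''+1⟩)
    have hne : σ ⟨j + 1, hj⟩ ≠ σ ⟨j' + 1, hj'⟩ := by
      intro h
      have := σ.injective h
      simp [Fin.mk.injEq] at this
      omega
    have ha : A (σ ⟨j + 1, hj⟩) = A (σ ⟨j'' + 1, Nat.lt_of_succ_lt hj2⟩) :=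
      hv2.symm.trans hw1
    have hb : A (σ ⟨j' + 1, hj'⟩) = A (σ ⟨j'' + 1, Nat.lt_of_succ_lt hj2⟩) :=
      hv2'.symm.trans hw1
    rcases key_aux A h2 hne ha hb with h | h <;>
      [left; right] <;>
      · have := σ.injective h
        simp [Fin.mk.injEq] at this
        omega
  · intro i₀ j₀ hii ⟨hi2, hj2, hw1, hw2⟩
    simp only [Function.comp_apply] at hw1 hw2
    have hne : σ ⟨j, Nat.lt_of_succ_lt hj⟩ ≠ σ ⟨j', Nat.lt_of_succ_lt hj'⟩ := by
      intro h
      have := σ.injective h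
      simp [Fin.mk.injEq] at this
      omega
    have hi₀ : (⟨i₀ + 1, hi2⟩ : Fin n) = ⟨i, Nat.lt_of_succ_lt hi⟩ := by
      simp [Fin.mk.injEq]; omega
    have ha : A (σ ⟨j, Nat.lt_of_succ_lt hj⟩) = A (σ ⟨j₀ + 1, hj2⟩) := by
      rw [← hv1, ← hi₀, hw2]
    have hb : A (σ ⟨j', Nat.lt_of_succ_lt hj'⟩) = A (σ ⟨j₀ + 1, hj2⟩) := by
      rw [← hv1', ← hi₀, hw2]
    rcases key_aux A h2 hne ha hb with h | h <;>
      [left; right] <;>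
      · have := σ.injective h
        simp [Fin.mk.injEq] at this
        omega
end

section
/- Assume every letter occurs at most 2 times in A, and let S(i,i';j,j') be a square in the conflict graph G. Then N((i,j)) = N((i',j')), N((i,j')) = N((i',j)), and N((i,j)) ∩ N((i,j')) = ∅. Consequently, every vertex of G is adjacent to either none or exactly two of the four member vertices of the square. -/
/-- `N(v)`: the set of neighbors of `v` in the conflict graph. -/
def Nbhd {Γ : Type*} (n : ℕ) (A B : Fin n → Γ) (v : ℕ × ℕ) : Set (ℕ × ℕ) :=
  {w | ConflictAdj n A B v w}

/-- A square `S(i,i';j,j')`: `i ≠ i'`, `j ≠ j'`, and all four pairs are vertices. -/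
def IsConflictSquare {Γ : Type*} (n : ℕ) (A B : Fin n → Γ) (i i' j j' : ℕ) : Prop :=
  i ≠ i' ∧ j ≠ j' ∧ IsVertex n A B i j ∧ IsVertex n A B i j' ∧
    IsVertex n A B i' j ∧ IsVertex n A B i' j'

lemma two_occ {Γ : Type*} {n : ℕ} {f : Fin n → Γ}
    (hf : ∀ c : Γ, {x : Fin n | f x = c}.ncard ≤ 2)
    {x y u : Fin n} (hxy : f x = f y) (hne : x ≠ y) (hu : f u = f x) :
    u = x ∨ u = y := by
  by_contra hcon
  push_neg at hcon
  have hsub : ({u, x, y} : Set (Fin n)) ⊆ {z : Fin n | f z = f x} := by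
    intro z hz
    rcases hz with rfl | rfl | rfl
    · exact hu
    · rfl
    · exact hxy.symm
  have h3 : ({u, x, y} : Set (Fin n)).ncard = 3 := by
    rw [Set.ncard_insert_of_notMem (by simp [hcon.1, hcon.2]), Set.ncard_pair hne]
  have hle := Set.ncard_le_ncard hsub (Set.toFinite _)
  have := hf (f x)
  omega

lemma conflictAdj_symm {Γ : Type*} {n : ℕ} {A B : Fin n → Γ} {v w : ℕ × ℕ}
    (h : ConflictAdj n A B v w) : ConflictAdj n A B w v := by
  obtain ⟨h1, h2, h3, p, hp, hor⟩ := h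
  exact ⟨h2, h1, h3.symm, -p, by omega, by omega⟩

set_option maxHeartbeats 1000000 in
lemma classify {Γ : Type*} {n : ℕ} {A B : Fin n → Γ}
    (hA2 : ∀ c : Γ, {x : Fin n | A x = c}.ncard ≤ 2)
    (hB2 : ∀ c : Γ, {x : Fin n | B x = c}.ncard ≤ 2)
    {i i' j j' : ℕ} (hsq : IsConflictSquare n A B i i' j j')
    {w : ℕ × ℕ} (hw : w ∈ Nbhd n A B (i, j)) :
    ((w.1 : ℤ) = i ∧ (w.2 : ℤ) = j') ∨ ((w.1 : ℤ) = i' ∧ (w.2 : ℤ) = j) ∨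
    ((w.1 : ℤ) = (i : ℤ) + 1 ∧ (w.2 : ℤ) = (j' : ℤ) + 1) ∨
    ((w.1 : ℤ) = (i : ℤ) - 1 ∧ (w.2 : ℤ) = (j' : ℤ) - 1) ∨
    ((w.1 : ℤ) = (i' : ℤ) + 1 ∧ (w.2 : ℤ) = (j : ℤ) + 1) ∨
    ((w.1 : ℤ) = (i' : ℤ) - 1 ∧ (w.2 : ℤ) = (j : ℤ) - 1) := by
  obtain ⟨hii, hjj, vij, vij', vi'j, vi'j'⟩ := hsq
  obtain ⟨a, b⟩ := w
  obtain ⟨-, hwv, hne, p, hp, hor⟩ := hw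
  obtain ⟨hi, hj, e1, e2⟩ := vij
  obtain ⟨_, hj', f1, f2⟩ := vij'
  obtain ⟨hi', _, g1, g2⟩ := vi'j
  obtain ⟨_, _, k1, k2⟩ := vi'j'
  obtain ⟨ha, hb, we1, we2⟩ := hwv
  dsimp only at hor ⊢
  have hAii' : A ⟨i, Nat.lt_of_succ_lt hi⟩ = A ⟨i', Nat.lt_of_succ_lt hi'⟩ :=
    e1.trans g1.symm
  have hAii'1 : A ⟨i + 1, hi⟩ = A ⟨i' + 1, hi'⟩ := e2.trans g2.symm
  have hBjj' : B ⟨j, Nat.lt_of_succ_lt hj⟩ = B ⟨j', Nat.lt_of_succ_lt hj'⟩ :=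
    e1.symm.trans f1
  have hBjj'1 : B ⟨j + 1, hj⟩ = B ⟨j' + 1, hj'⟩ := e2.symm.trans f2
  have neA : (⟨i, Nat.lt_of_succ_lt hi⟩ : Fin n) ≠ ⟨i', Nat.lt_of_succ_lt hi'⟩ :=
    fun h => hii (by injection h)
  have neA1 : (⟨i + 1, hi⟩ : Fin n) ≠ ⟨i' + 1, hi'⟩ :=
    fun h => hii (by injection h with h'; omega)
  have neB : (⟨j, Nat.lt_of_succ_lt hj⟩ : Fin n) ≠ ⟨j', Nat.lt_of_succ_lt hj'⟩ :=
    fun h => hjj (by injection h)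
  have neB1 : (⟨j + 1, hj⟩ : Fin n) ≠ ⟨j' + 1, hj'⟩ :=
    fun h => hjj (by injection h with h'; omega)
  have occA : ∀ u : Fin n, A u = A ⟨i, Nat.lt_of_succ_lt hi⟩ →
      (u : ℕ) = i ∨ (u : ℕ) = i' := by
    intro u hu
    rcases two_occ hA2 hAii' neA hu with h | h <;> [left; right] <;>
      exact congrArg Fin.val h
  have occA1 : ∀ u : Fin n, A u = A ⟨i + 1, hi⟩ →
      (u : ℕ) = i + 1 ∨ (u : ℕ) = i' + 1 := by
    intro u hu
    rcases two_occ hA2 hAii'1 neA1 hu with h | h <;> [left; right] <;>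
      exact congrArg Fin.val h
  have occB : ∀ u : Fin n, B u = B ⟨j, Nat.lt_of_succ_lt hj⟩ →
      (u : ℕ) = j ∨ (u : ℕ) = j' := by
    intro u hu
    rcases two_occ hB2 hBjj' neB hu with h | h <;> [left; right] <;>
      exact congrArg Fin.val h
  have occB1 : ∀ u : Fin n, B u = B ⟨j + 1, hj⟩ →
      (u : ℕ) = j + 1 ∨ (u : ℕ) = j' + 1 := by
    intro u hu
    rcases two_occ hB2 hBjj'1 neB1 hu with h | h <;> [left; right] <;>
      exact congrArg Fin.val h
  rcases hp with rfl | rfl | rfl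
  · rcases hor with ⟨h1, h2⟩ | ⟨h1, h2⟩
    · have hfin : (⟨a + 1, ha⟩ : Fin n) = ⟨i, Nat.lt_of_succ_lt hi⟩ :=
        Fin.ext (by simp; omega)
      have hk : B (⟨b + 1, hb⟩ : Fin n) = B ⟨j, Nat.lt_of_succ_lt hj⟩ := by
        rw [← we2, hfin]; exact e1
      have := occB _ hk
      simp only [Fin.val_mk] at this
      omega
    · have hfin : (⟨b + 1, hb⟩ : Fin n) = ⟨j, Nat.lt_of_succ_lt hj⟩ :=
        Fin.ext (by simp; omega)
      have hk : A (⟨a + 1, ha⟩ : Fin n) = A ⟨i, Nat.lt_of_succ_lt hi⟩ := by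
        rw [we2, hfin]; exact e1.symm
      have := occA _ hk
      simp only [Fin.val_mk] at this
      omega
  · rcases hor with ⟨h1, h2⟩ | ⟨h1, h2⟩
    · have hfin : (⟨a, Nat.lt_of_succ_lt ha⟩ : Fin n) = ⟨i, Nat.lt_of_succ_lt hi⟩ :=
        Fin.ext (by simp; omega)
      have hk : B (⟨b, Nat.lt_of_succ_lt hb⟩ : Fin n) = B ⟨j, Nat.lt_of_succ_lt hj⟩ := by
        rw [← we1, hfin]; exact e1
      have := occB _ hk
      simp only [Fin.val_mk] at this
      omega
    · have hfin : (⟨b, Nat.lt_of_succ_lt hb⟩ : Fin n) = ⟨j, Nat.lt_of_succ_lt hj⟩ :=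
        Fin.ext (by simp; omega)
      have hk : A (⟨a, Nat.lt_of_succ_lt ha⟩ : Fin n) = A ⟨i, Nat.lt_of_succ_lt hi⟩ := by
        rw [we1, hfin]; exact e1.symm
      have := occA _ hk
      simp only [Fin.val_mk] at this
      omega
  · rcases hor with ⟨h1, h2⟩ | ⟨h1, h2⟩
    · have hfin : (⟨a, Nat.lt_of_succ_lt ha⟩ : Fin n) = ⟨i + 1, hi⟩ :=
        Fin.ext (by simp; omega)
      have hk : B (⟨b, Nat.lt_of_succ_lt hb⟩ : Fin n) = B ⟨j + 1, hj⟩ := by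
        rw [← we1, hfin]; exact e2
      have := occB1 _ hk
      simp only [Fin.val_mk] at this
      omega
    · have hfin : (⟨b, Nat.lt_of_succ_lt hb⟩ : Fin n) = ⟨j + 1, hj⟩ :=
        Fin.ext (by simp; omega)
      have hk : A (⟨a, Nat.lt_of_succ_lt ha⟩ : Fin n) = A ⟨i + 1, hi⟩ := by
        rw [we1, hfin]; exact e2.symm
      have := occA1 _ hk
      simp only [Fin.val_mk] at this
      omega

lemma mem_of_classify {Γ : Type*} {n : ℕ} {A B : Fin n → Γ} {i i' j j' : ℕ}
    (hii : i ≠ i') (hjj : j ≠ j') (hv : IsVertex n A B i' j')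
    {w : ℕ × ℕ} (hwv : IsVertex n A B w.1 w.2)
    (hc : ((w.1 : ℤ) = i ∧ (w.2 : ℤ) = j') ∨ ((w.1 : ℤ) = i' ∧ (w.2 : ℤ) = j) ∨
    ((w.1 : ℤ) = (i : ℤ) + 1 ∧ (w.2 : ℤ) = (j' : ℤ) + 1) ∨
    ((w.1 : ℤ) = (i : ℤ) - 1 ∧ (w.2 : ℤ) = (j' : ℤ) - 1) ∨
    ((w.1 : ℤ) = (i' : ℤ) + 1 ∧ (w.2 : ℤ) = (j : ℤ) + 1) ∨
    ((w.1 : ℤ) = (i' : ℤ) - 1 ∧ (w.2 : ℤ) = (j : ℤ) - 1)) :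
    w ∈ Nbhd n A B (i', j') := by
  obtain ⟨a, b⟩ := w
  dsimp only at hc hwv
  have hne : (i', j') ≠ (a, b) := by
    intro hEq
    injection hEq with hx hy
    omega
  rcases hc with ⟨h1, h2⟩ | ⟨h1, h2⟩ | ⟨h1, h2⟩ | ⟨h1, h2⟩ | ⟨h1, h2⟩ | ⟨h1, h2⟩
  · exact ⟨hv, hwv, hne, 0, by norm_num, by dsimp only; omega⟩
  · exact ⟨hv, hwv, hne, 0, by norm_num, by dsimp only; omega⟩
  · exact ⟨hv, hwv, hne, 1, by norm_num, by dsimp only; omega⟩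
  · exact ⟨hv, hwv, hne, -1, by norm_num, by dsimp only; omega⟩
  · exact ⟨hv, hwv, hne, 1, by norm_num, by dsimp only; omega⟩
  · exact ⟨hv, hwv, hne, -1, by norm_num, by dsimp only; omega⟩

set_option maxHeartbeats 1000000 in
theorem stmt_7 {Γ : Type*} (n : ℕ) (hn : 2 ≤ n) (A B : Fin n → Γ)
    (σ : Equiv.Perm (Fin n)) (hB : B = A ∘ σ)
    (h2 : ∀ c : Γ, {x : Fin n | A x = c}.ncard ≤ 2)
    (i i' j j' : ℕ) (hsq : IsConflictSquare n A B i i' j j') :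
    Nbhd n A B (i, j) = Nbhd n A B (i', j') ∧
    Nbhd n A B (i, j') = Nbhd n A B (i', j) ∧
    Nbhd n A B (i, j) ∩ Nbhd n A B (i, j') = ∅ ∧
    (∀ v : ℕ × ℕ, IsVertex n A B v.1 v.2 →
      (({(i, j), (i, j'), (i', j), (i', j')} : Set (ℕ × ℕ)) ∩ Nbhd n A B v).ncard = 0 ∨
      (({(i, j), (i, j'), (i', j), (i', j')} : Set (ℕ × ℕ)) ∩ Nbhd n A B v).ncard = 2) := by
  have hB2 : ∀ c : Γ, {x : Fin n | B x = c}.ncard ≤ 2 := by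
    intro c
    have he : {x : Fin n | B x = c} = σ.symm '' {x : Fin n | A x = c} := by
      ext x
      simp only [Set.mem_setOf_eq, Set.mem_image, hB, Function.comp_apply]
      constructor
      · intro h; exact ⟨σ x, h, σ.symm_apply_apply x⟩
      · rintro ⟨y, hy, rfl⟩; simpa using hy
    rw [he, Set.ncard_image_of_injective _ σ.symm.injective]
    exact h2 c
  obtain ⟨hii, hjj, vij, vij', vi'j, vi'j'⟩ := hsq
  have sq1 : IsConflictSquare n A B i i' j j' := ⟨hii, hjj, vij, vij', vi'j, vi'j'⟩
  have sq1' : IsConflictSquare n A B i' i j' j :=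
    ⟨hii.symm, hjj.symm, vi'j', vi'j, vij', vij⟩
  have sq2 : IsConflictSquare n A B i i' j' j :=
    ⟨hii, hjj.symm, vij', vij, vi'j', vi'j⟩
  have sq2' : IsConflictSquare n A B i' i j j' :=
    ⟨hii.symm, hjj, vi'j, vi'j', vij, vij'⟩
  have part1 : Nbhd n A B (i, j) = Nbhd n A B (i', j') := by
    ext w
    constructor
    · intro hw
      exact mem_of_classify hii hjj vi'j' hw.2.1 (classify h2 hB2 sq1 hw)
    · intro hw
      exact mem_of_classify hii.symm hjj.symm vij hw.2.1 (classify h2 hB2 sq1' hw)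
  have part2 : Nbhd n A B (i, j') = Nbhd n A B (i', j) := by
    ext w
    constructor
    · intro hw
      exact mem_of_classify hii hjj.symm vi'j hw.2.1 (classify h2 hB2 sq2 hw)
    · intro hw
      exact mem_of_classify hii.symm hjj vij' hw.2.1 (classify h2 hB2 sq2' hw)
  have part3 : Nbhd n A B (i, j) ∩ Nbhd n A B (i, j') = ∅ := by
    ext w
    simp only [Set.mem_inter_iff, Set.mem_empty_iff_false, iff_false, not_and]
    intro hw1 hw2
    have c1 := classify h2 hB2 sq1 hw1
    have c2 := classify h2 hB2 sq2 hw2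
    omega
  refine ⟨part1, part2, part3, ?_⟩
  intro v hv
  have hdisj : ¬ (v ∈ Nbhd n A B (i, j) ∧ v ∈ Nbhd n A B (i, j')) := by
    intro h
    have : v ∈ Nbhd n A B (i, j) ∩ Nbhd n A B (i, j') := ⟨h.1, h.2⟩
    rw [part3] at this
    exact this
  have hne1 : ((i, j) : ℕ × ℕ) ≠ (i', j') := fun h => hii (by injection h)
  have hne2 : ((i, j') : ℕ × ℕ) ≠ (i', j) := fun h => hii (by injection h)
  by_cases h1 : v ∈ Nbhd n A B (i, j) <;> by_cases hh2 : v ∈ Nbhd n A B (i, j')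
  · exact absurd ⟨h1, hh2⟩ hdisj
  · right
    have hset : ({(i, j), (i, j'), (i', j), (i', j')} : Set (ℕ × ℕ)) ∩ Nbhd n A B v
        = {(i, j), (i', j')} := by
      ext t
      simp only [Set.mem_inter_iff, Set.mem_insert_iff, Set.mem_singleton_iff]
      constructor
      · rintro ⟨ht, hadj⟩
        have hsym : v ∈ Nbhd n A B t := conflictAdj_symm hadj
        rcases ht with rfl | rfl | rfl | rfl
        · exact Or.inl rfl
        · exact absurd hsym hh2
        · rw [← part2] at hsym; exact absurd hsym hh2
        · exact Or.inr rfl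
      · rintro (rfl | rfl)
        · exact ⟨Or.inl rfl, conflictAdj_symm h1⟩
        · refine ⟨Or.inr (Or.inr (Or.inr rfl)), conflictAdj_symm ?_⟩
          show v ∈ Nbhd n A B (i', j')
          rw [← part1]; exact h1
    rw [hset, Set.ncard_pair hne1]
  · right
    have hset : ({(i, j), (i, j'), (i', j), (i', j')} : Set (ℕ × ℕ)) ∩ Nbhd n A B v
        = {(i, j'), (i', j)} := by
      ext t
      simp only [Set.mem_inter_iff, Set.mem_insert_iff, Set.mem_singleton_iff]
      constructor
      · rintro ⟨ht, hadj⟩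
        have hsym : v ∈ Nbhd n A B t := conflictAdj_symm hadj
        rcases ht with rfl | rfl | rfl | rfl
        · exact absurd hsym h1
        · exact Or.inl rfl
        · exact Or.inr rfl
        · rw [← part1] at hsym; exact absurd hsym h1
      · rintro (rfl | rfl)
        · exact ⟨Or.inr (Or.inl rfl), conflictAdj_symm hh2⟩
        · refine ⟨Or.inr (Or.inr (Or.inl rfl)), conflictAdj_symm ?_⟩
          show v ∈ Nbhd n A B (i', j)
          rw [← part2]; exact hh2
    rw [hset, Set.ncard_pair hne2]
  · left
    have hset : ({(i, j), (i, j'), (i', j), (i', j')} : Set (ℕ × ℕ)) ∩ Nbhd n A B v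
        = ∅ := by
      ext t
      simp only [Set.mem_inter_iff, Set.mem_insert_iff, Set.mem_singleton_iff,
        Set.mem_empty_iff_false, iff_false, not_and]
      rintro (rfl | rfl | rfl | rfl) hadj
      · exact h1 (conflictAdj_symm hadj)
      · exact hh2 (conflictAdj_symm hadj)
      · have hm : v ∈ Nbhd n A B (i', j) := conflictAdj_symm hadj
        rw [← part2] at hm
        exact hh2 hm
      · have hm : v ∈ Nbhd n A B (i', j') := conflictAdj_symm hadj
        rw [← part1] at hm
        exact h1 hm
    rw [hset, Set.ncard_empty]
end

section
/- Assume every letter occurs at most 2 times in A. If a vertex (i,j) has degree exactly 6 in the conflict graph G, then there exist indices i' ≠ i and j' ≠ j such that S(i,i';j,j') is a square, the vertex (i',j') also has degree exactly 6, and N((i,j)) = N((i',j')) = {(i-1,j'-1), (i,j'), (i+1,j'+1), (i'-1,j-1), (i',j), (i'+1,j+1)}. -/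
lemma two_occ_aux {Γ : Type*} {n : ℕ} (A : Fin n → Γ)
    (h2 : ∀ c : Γ, {x : Fin n | A x = c}.ncard ≤ 2)
    {x y z : ℕ} (hx : x < n) (hy : y < n) (hz : z < n) {c : Γ}
    (hAx : A ⟨x, hx⟩ = c) (hAy : A ⟨y, hy⟩ = c) (hAz : A ⟨z, hz⟩ = c) :
    x = y ∨ x = z ∨ y = z := by
  by_contra h
  push_neg at h
  obtain ⟨e1, e2, e3⟩ := h
  have hsub : ({⟨x,hx⟩, ⟨y,hy⟩, ⟨z,hz⟩} : Set (Fin n)) ⊆ {t | A t = c} := by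
    intro t ht
    rcases ht with rfl|rfl|rfl <;> simpa
  have hcard : ({⟨x,hx⟩, ⟨y,hy⟩, ⟨z,hz⟩} : Set (Fin n)).ncard = 3 := by
    rw [Set.ncard_insert_of_notMem (by simp [Fin.ext_iff, e1, e2]),
        Set.ncard_pair (by simp [Fin.ext_iff, e3])]
  have hle := Set.ncard_le_ncard hsub (Set.toFinite _)
  have := h2 c
  omega

lemma ncard_union6_le {α : Type*} (S1 S2 S3 S4 S5 S6 : Set α) :
    (S1 ∪ S2 ∪ S3 ∪ S4 ∪ S5 ∪ S6).ncard ≤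
      S1.ncard + S2.ncard + S3.ncard + S4.ncard + S5.ncard + S6.ncard :=
  calc (S1 ∪ S2 ∪ S3 ∪ S4 ∪ S5 ∪ S6).ncard
      ≤ (S1 ∪ S2 ∪ S3 ∪ S4 ∪ S5).ncard + S6.ncard := Set.ncard_union_le _ _
    _ ≤ ((S1 ∪ S2 ∪ S3 ∪ S4).ncard + S5.ncard) + S6.ncard := by
        have := Set.ncard_union_le (S1 ∪ S2 ∪ S3 ∪ S4) S5; omega
    _ ≤ (((S1 ∪ S2 ∪ S3).ncard + S4.ncard) + S5.ncard) + S6.ncard := by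
        have := Set.ncard_union_le (S1 ∪ S2 ∪ S3) S4; omega
    _ ≤ ((((S1 ∪ S2).ncard + S3.ncard) + S4.ncard) + S5.ncard) + S6.ncard := by
        have := Set.ncard_union_le (S1 ∪ S2) S3; omega
    _ ≤ S1.ncard + S2.ncard + S3.ncard + S4.ncard + S5.ncard + S6.ncard := by
        have := Set.ncard_union_le S1 S2; omega

lemma subsingleton_ncard_le_one {α : Type*} {S : Set α} (h : S.Subsingleton) : S.ncard ≤ 1 := by
  rcases h.eq_empty_or_singleton with rfl | ⟨x, rfl⟩ <;> simp

section Slots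

variable {Γ : Type*} {n : ℕ} (A B : Fin n → Γ) (a b : ℕ → Γ) (i j : ℕ)

def Slot1 : Set (ℕ × ℕ) := {w | w ∈ Nbhd n A B (i, j) ∧ w.1 = i}
def Slot2 : Set (ℕ × ℕ) :=
  {w | w ∈ Nbhd n A B (i, j) ∧ (w.1 : ℤ) = (i : ℤ) + 1 ∧ (w.2 : ℤ) ≠ (j : ℤ) + 1}
def Slot3 : Set (ℕ × ℕ) :=
  {w | w ∈ Nbhd n A B (i, j) ∧ (w.1 : ℤ) = (i : ℤ) - 1 ∧ (w.2 : ℤ) ≠ (j : ℤ) - 1}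
def Slot4 : Set (ℕ × ℕ) := {w | w ∈ Nbhd n A B (i, j) ∧ w.2 = j}
def Slot5 : Set (ℕ × ℕ) :=
  {w | w ∈ Nbhd n A B (i, j) ∧ (w.2 : ℤ) = (j : ℤ) + 1 ∧ (w.1 : ℤ) ≠ (i : ℤ) + 1}
def Slot6 : Set (ℕ × ℕ) :=
  {w | w ∈ Nbhd n A B (i, j) ∧ (w.2 : ℤ) = (j : ℤ) - 1 ∧ (w.1 : ℤ) ≠ (i : ℤ) - 1}

lemma nbhd_mem
    (hvert : ∀ x y : ℕ, IsVertex n A B x y ↔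
      (x + 1 < n ∧ y + 1 < n ∧ a x = b y ∧ a (x+1) = b (y+1)))
    : ∀ w : ℕ × ℕ, w ∈ Nbhd n A B (i, j) →
    (w.1 + 1 < n ∧ w.2 + 1 < n ∧ a w.1 = b w.2 ∧ a (w.1+1) = b (w.2+1)) ∧ (i, j) ≠ w ∧
    ∃ p : ℤ, (p = -1 ∨ p = 0 ∨ p = 1) ∧
      (((w.1 : ℤ) = (i : ℤ) + p ∧ (w.2 : ℤ) ≠ (j : ℤ) + p) ∨
       ((w.2 : ℤ) = (j : ℤ) + p ∧ (w.1 : ℤ) ≠ (i : ℤ) + p)) := by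
  intro w hw
  obtain ⟨-, hvw, hne, hp⟩ := hw
  exact ⟨(hvert _ _).mp hvw, hne, hp⟩

lemma slots_cover
    (hvert : ∀ x y : ℕ, IsVertex n A B x y ↔
      (x + 1 < n ∧ y + 1 < n ∧ a x = b y ∧ a (x+1) = b (y+1)))
    : ∀ w ∈ Nbhd n A B (i, j),
    w ∈ Slot1 A B i j ∨ w ∈ Slot2 A B i j ∨ w ∈ Slot3 A B i j ∨
    w ∈ Slot4 A B i j ∨ w ∈ Slot5 A B i j ∨ w ∈ Slot6 A B i j := by
  intro w hw
  obtain ⟨-, hne, p, hp, hcase⟩ := nbhd_mem A B a b i j hvert w hw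
  rcases hp with rfl | rfl | rfl
  · rcases hcase with ⟨h1, h2'⟩ | ⟨h1, h2'⟩
    · exact Or.inr (Or.inr (Or.inl ⟨hw, by omega, by omega⟩))
    · exact Or.inr (Or.inr (Or.inr (Or.inr (Or.inr ⟨hw, by omega, by omega⟩))))
  · rcases hcase with ⟨h1, h2'⟩ | ⟨h1, h2'⟩
    · exact Or.inl ⟨hw, by omega⟩
    · refine Or.inr (Or.inr (Or.inr (Or.inl ⟨hw, by omega⟩)))
  · rcases hcase with ⟨h1, h2'⟩ | ⟨h1, h2'⟩
    · exact Or.inr (Or.inl ⟨hw, by omega, by omega⟩)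
    · exact Or.inr (Or.inr (Or.inr (Or.inr (Or.inl ⟨hw, by omega, by omega⟩))))

lemma slot1_sub
    (hvert : ∀ x y : ℕ, IsVertex n A B x y ↔
      (x + 1 < n ∧ y + 1 < n ∧ a x = b y ∧ a (x+1) = b (y+1)))
    (occb : ∀ {x y z : ℕ}, x < n → y < n → z < n → ∀ {c : Γ},
      b x = c → b y = c → b z = c → x = y ∨ x = z ∨ y = z)
    (hi1 : i + 1 < n) (hj1 : j + 1 < n) (hvA : a i = b j) (hvB : a (i + 1) = b (j + 1))
    : (Slot1 A B i j).Subsingleton := by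
  rintro ⟨w1, w2⟩ ⟨hwN, hw1⟩ ⟨u1, u2⟩ ⟨huN, hu1⟩
  obtain ⟨⟨hwa, hwb, hwc, hwd⟩, hwne, -⟩ := nbhd_mem A B a b i j hvert _ hwN
  obtain ⟨⟨hua, hub, huc, hud⟩, hune, -⟩ := nbhd_mem A B a b i j hvert _ huN
  have ew : w1 = i := hw1
  have eu : u1 = i := hu1
  subst ew; subst eu
  have hw2j : w2 ≠ j := fun h => hwne (by rw [h])
  have hu2j : u2 ≠ j := fun h => hune (by rw [h])
  rcases occb (x := w2) (y := u2) (z := j) (by omega) (by omega) (by omega)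
      hwc.symm huc.symm hvA.symm with h | h | h
  · rw [h]
  · exact absurd h hw2j
  · exact absurd h hu2j

lemma slot2_sub
    (hvert : ∀ x y : ℕ, IsVertex n A B x y ↔
      (x + 1 < n ∧ y + 1 < n ∧ a x = b y ∧ a (x+1) = b (y+1)))
    (occb : ∀ {x y z : ℕ}, x < n → y < n → z < n → ∀ {c : Γ},
      b x = c → b y = c → b z = c → x = y ∨ x = z ∨ y = z)
    (hi1 : i + 1 < n) (hj1 : j + 1 < n) (hvA : a i = b j) (hvB : a (i + 1) = b (j + 1))
    : (Slot2 A B i j).Subsingleton := by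
  rintro ⟨w1, w2⟩ ⟨hwN, hw1, hw2⟩ ⟨u1, u2⟩ ⟨huN, hu1, hu2⟩
  obtain ⟨⟨hwa, hwb, hwc, hwd⟩, hwne, -⟩ := nbhd_mem A B a b i j hvert _ hwN
  obtain ⟨⟨hua, hub, huc, hud⟩, hune, -⟩ := nbhd_mem A B a b i j hvert _ huN
  have ew : w1 = i + 1 := by omega
  have eu : u1 = i + 1 := by omega
  subst ew; subst eu
  rcases occb (x := w2) (y := u2) (z := j + 1) (by omega) (by omega) (by omega)
      hwc.symm huc.symm hvB.symm with h | h | h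
  · rw [h]
  · exact absurd h (by omega)
  · exact absurd h (by omega)

lemma slot3_sub
    (hvert : ∀ x y : ℕ, IsVertex n A B x y ↔
      (x + 1 < n ∧ y + 1 < n ∧ a x = b y ∧ a (x+1) = b (y+1)))
    (occb : ∀ {x y z : ℕ}, x < n → y < n → z < n → ∀ {c : Γ},
      b x = c → b y = c → b z = c → x = y ∨ x = z ∨ y = z)
    (hi1 : i + 1 < n) (hj1 : j + 1 < n) (hvA : a i = b j) (hvB : a (i + 1) = b (j + 1))
    : (Slot3 A B i j).Subsingleton := by
  rintro ⟨w1, w2⟩ ⟨hwN, hw1, hw2⟩ ⟨u1, u2⟩ ⟨huN, hu1, hu2⟩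
  obtain ⟨⟨hwa, hwb, hwc, hwd⟩, hwne, -⟩ := nbhd_mem A B a b i j hvert _ hwN
  obtain ⟨⟨hua, hub, huc, hud⟩, hune, -⟩ := nbhd_mem A B a b i j hvert _ huN
  have ew : w1 + 1 = i := by omega
  have eu : u1 + 1 = i := by omega
  rw [ew] at hwd
  rw [eu] at hud
  rcases occb (x := w2 + 1) (y := u2 + 1) (z := j) (by omega) (by omega) (by omega)
      hwd.symm hud.symm hvA.symm with h | h | h
  · have e1 : w1 = u1 := by omega
    have e2 : w2 = u2 := by omega
    rw [e1, e2]
  · exact absurd h (by omega)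
  · exact absurd h (by omega)

lemma slot4_sub
    (hvert : ∀ x y : ℕ, IsVertex n A B x y ↔
      (x + 1 < n ∧ y + 1 < n ∧ a x = b y ∧ a (x+1) = b (y+1)))
    (occa : ∀ {x y z : ℕ}, x < n → y < n → z < n → ∀ {c : Γ},
      a x = c → a y = c → a z = c → x = y ∨ x = z ∨ y = z)
    (hi1 : i + 1 < n) (hj1 : j + 1 < n) (hvA : a i = b j) (hvB : a (i + 1) = b (j + 1))
    : (Slot4 A B i j).Subsingleton := by
  rintro ⟨w1, w2⟩ ⟨hwN, hw1⟩ ⟨u1, u2⟩ ⟨huN, hu1⟩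
  obtain ⟨⟨hwa, hwb, hwc, hwd⟩, hwne, -⟩ := nbhd_mem A B a b i j hvert _ hwN
  obtain ⟨⟨hua, hub, huc, hud⟩, hune, -⟩ := nbhd_mem A B a b i j hvert _ huN
  have ew : w2 = j := hw1
  have eu : u2 = j := hu1
  subst ew; subst eu
  have hw1i : w1 ≠ i := fun h => hwne (by rw [h])
  have hu1i : u1 ≠ i := fun h => hune (by rw [h])
  rcases occa (x := w1) (y := u1) (z := i) (by omega) (by omega) (by omega)
      hwc huc hvA with h | h | h
  · rw [h]
  · exact absurd h hw1i
  · exact absurd h hu1i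

lemma slot5_sub
    (hvert : ∀ x y : ℕ, IsVertex n A B x y ↔
      (x + 1 < n ∧ y + 1 < n ∧ a x = b y ∧ a (x+1) = b (y+1)))
    (occa : ∀ {x y z : ℕ}, x < n → y < n → z < n → ∀ {c : Γ},
      a x = c → a y = c → a z = c → x = y ∨ x = z ∨ y = z)
    (hi1 : i + 1 < n) (hj1 : j + 1 < n) (hvA : a i = b j) (hvB : a (i + 1) = b (j + 1))
    : (Slot5 A B i j).Subsingleton := by
  rintro ⟨w1, w2⟩ ⟨hwN, hw1, hw2⟩ ⟨u1, u2⟩ ⟨huN, hu1, hu2⟩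
  obtain ⟨⟨hwa, hwb, hwc, hwd⟩, hwne, -⟩ := nbhd_mem A B a b i j hvert _ hwN
  obtain ⟨⟨hua, hub, huc, hud⟩, hune, -⟩ := nbhd_mem A B a b i j hvert _ huN
  have ew : w2 = j + 1 := by omega
  have eu : u2 = j + 1 := by omega
  subst ew; subst eu
  rcases occa (x := w1) (y := u1) (z := i + 1) (by omega) (by omega) (by omega)
      hwc huc hvB with h | h | h
  · rw [h]
  · exact absurd h (by omega)
  · exact absurd h (by omega)

lemma slot6_sub
    (hvert : ∀ x y : ℕ, IsVertex n A B x y ↔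
      (x + 1 < n ∧ y + 1 < n ∧ a x = b y ∧ a (x+1) = b (y+1)))
    (occa : ∀ {x y z : ℕ}, x < n → y < n → z < n → ∀ {c : Γ},
      a x = c → a y = c → a z = c → x = y ∨ x = z ∨ y = z)
    (hi1 : i + 1 < n) (hj1 : j + 1 < n) (hvA : a i = b j) (hvB : a (i + 1) = b (j + 1))
    : (Slot6 A B i j).Subsingleton := by
  rintro ⟨w1, w2⟩ ⟨hwN, hw1, hw2⟩ ⟨u1, u2⟩ ⟨huN, hu1, hu2⟩
  obtain ⟨⟨hwa, hwb, hwc, hwd⟩, hwne, -⟩ := nbhd_mem A B a b i j hvert _ hwN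
  obtain ⟨⟨hua, hub, huc, hud⟩, hune, -⟩ := nbhd_mem A B a b i j hvert _ huN
  have ew : w2 + 1 = j := by omega
  have eu : u2 + 1 = j := by omega
  rw [ew] at hwd
  rw [eu] at hud
  rcases occa (x := w1 + 1) (y := u1 + 1) (z := i) (by omega) (by omega) (by omega)
      hwd hud hvA with h | h | h
  · have e1 : w1 = u1 := by omega
    have e2 : w2 = u2 := by omega
    rw [e1, e2]
  · exact absurd h (by omega)
  · exact absurd h (by omega)

end Slots

lemma six_slots_nonempty {α : Type*} {N T1 T2 T3 T4 T5 T6 : Set α}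
    (hcov : ∀ w ∈ N, w ∈ T1 ∨ w ∈ T2 ∨ w ∈ T3 ∨ w ∈ T4 ∨ w ∈ T5 ∨ w ∈ T6)
    (h1 : T1.Subsingleton) (h2 : T2.Subsingleton) (h3 : T3.Subsingleton)
    (h4 : T4.Subsingleton) (h5 : T5.Subsingleton) (h6 : T6.Subsingleton)
    (hN : N.ncard = 6) :
    T1.Nonempty ∧ T2.Nonempty ∧ T3.Nonempty ∧ T4.Nonempty ∧ T5.Nonempty ∧ T6.Nonempty := by
  have hNsub : N ⊆ T1 ∪ T2 ∪ T3 ∪ T4 ∪ T5 ∪ T6 := by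
    intro w hw
    rcases hcov w hw with h | h | h | h | h | h <;> simp only [Set.mem_union] <;> tauto
  have hufin : (T1 ∪ T2 ∪ T3 ∪ T4 ∪ T5 ∪ T6).Finite :=
    ((((h1.finite.union h2.finite).union h3.finite).union h4.finite).union
      h5.finite).union h6.finite
  have hcard : N.ncard ≤ T1.ncard + T2.ncard + T3.ncard + T4.ncard + T5.ncard + T6.ncard :=
    (Set.ncard_le_ncard hNsub hufin).trans (ncard_union6_le _ _ _ _ _ _)
  have hb1 := subsingleton_ncard_le_one h1
  have hb2 := subsingleton_ncard_le_one h2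
  have hb3 := subsingleton_ncard_le_one h3
  have hb4 := subsingleton_ncard_le_one h4
  have hb5 := subsingleton_ncard_le_one h5
  have hb6 := subsingleton_ncard_le_one h6
  have key : ∀ T : Set α, T.ncard ≤ 1 → T = ∅ ∨ T.Nonempty → (¬ T.Nonempty → False) → T.Nonempty := by
    intro T _ hT hf
    rcases hT with h | h
    · exact absurd (fun hne => by rw [h] at hne; exact Set.not_nonempty_empty hne) hf
    · exact h
  refine ⟨?_, ?_, ?_, ?_, ?_, ?_⟩
  · rcases T1.eq_empty_or_nonempty with h | h
    · have h0 : T1.ncard = 0 := by rw [h]; exact Set.ncard_empty _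
      omega
    · exact h
  · rcases T2.eq_empty_or_nonempty with h | h
    · have h0 : T2.ncard = 0 := by rw [h]; exact Set.ncard_empty _
      omega
    · exact h
  · rcases T3.eq_empty_or_nonempty with h | h
    · have h0 : T3.ncard = 0 := by rw [h]; exact Set.ncard_empty _
      omega
    · exact h
  · rcases T4.eq_empty_or_nonempty with h | h
    · have h0 : T4.ncard = 0 := by rw [h]; exact Set.ncard_empty _
      omega
    · exact h
  · rcases T5.eq_empty_or_nonempty with h | h
    · have h0 : T5.ncard = 0 := by rw [h]; exact Set.ncard_empty _
      omega
    · exact h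
  · rcases T6.eq_empty_or_nonempty with h | h
    · have h0 : T6.ncard = 0 := by rw [h]; exact Set.ncard_empty _
      omega
    · exact h

section Main

variable {Γ : Type*} {n : ℕ} {A B : Fin n → Γ} {a b : ℕ → Γ} {i j : ℕ}

lemma extract
    (hvert : ∀ x y : ℕ, IsVertex n A B x y ↔
      (x + 1 < n ∧ y + 1 < n ∧ a x = b y ∧ a (x+1) = b (y+1)))
    (occa : ∀ {x y z : ℕ}, x < n → y < n → z < n → ∀ {c : Γ},
      a x = c → a y = c → a z = c → x = y ∨ x = z ∨ y = z)
    (occb : ∀ {x y z : ℕ}, x < n → y < n → z < n → ∀ {c : Γ},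
      b x = c → b y = c → b z = c → x = y ∨ x = z ∨ y = z)
    (hi1 : i + 1 < n) (hj1 : j + 1 < n) (hvA : a i = b j) (hvB : a (i + 1) = b (j + 1))
    (hdeg : (Nbhd n A B (i, j)).ncard = 6) :
    ∃ i' j' : ℕ, 1 ≤ i ∧ 1 ≤ j ∧ 1 ≤ i' ∧ 1 ≤ j' ∧ i' + 1 < n ∧ j' + 1 < n ∧
      i' ≠ i ∧ j' ≠ j ∧
      a i = b j' ∧ a (i+1) = b (j'+1) ∧ a i' = b j ∧ a (i'+1) = b (j+1) ∧
      ((i-1 : ℕ), (j'-1 : ℕ)) ∈ Nbhd n A B (i, j) ∧ (i, j') ∈ Nbhd n A B (i, j) ∧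
      (i+1, j'+1) ∈ Nbhd n A B (i, j) ∧ ((i'-1 : ℕ), (j-1 : ℕ)) ∈ Nbhd n A B (i, j) ∧
      (i', j) ∈ Nbhd n A B (i, j) ∧ (i'+1, j+1) ∈ Nbhd n A B (i, j) := by
  obtain ⟨hne1, hne2, hne3, hne4, hne5, hne6⟩ :=
    six_slots_nonempty (slots_cover A B a b i j hvert)
      (slot1_sub A B a b i j hvert occb hi1 hj1 hvA hvB)
      (slot2_sub A B a b i j hvert occb hi1 hj1 hvA hvB)
      (slot3_sub A B a b i j hvert occb hi1 hj1 hvA hvB)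
      (slot4_sub A B a b i j hvert occa hi1 hj1 hvA hvB)
      (slot5_sub A B a b i j hvert occa hi1 hj1 hvA hvB)
      (slot6_sub A B a b i j hvert occa hi1 hj1 hvA hvB) hdeg
  obtain ⟨⟨p1, q1⟩, hm1⟩ := hne1
  obtain ⟨⟨p2, q2⟩, hm2⟩ := hne2
  obtain ⟨⟨p3, q3⟩, hm3⟩ := hne3
  obtain ⟨⟨p4, q4⟩, hm4⟩ := hne4
  obtain ⟨⟨p5, q5⟩, hm5⟩ := hne5
  obtain ⟨⟨p6, q6⟩, hm6⟩ := hne6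
  obtain ⟨hN1, he1⟩ := hm1
  obtain ⟨hN2, he2, he2'⟩ := hm2
  obtain ⟨hN3, he3, he3'⟩ := hm3
  obtain ⟨hN4, he4⟩ := hm4
  obtain ⟨hN5, he5, he5'⟩ := hm5
  obtain ⟨hN6, he6, he6'⟩ := hm6
  have ep1 : i = p1 := (he1 : p1 = i).symm
  subst ep1
  have eq4 : j = q4 := (he4 : q4 = j).symm
  subst eq4
  obtain ⟨hx1, hne1', -⟩ := nbhd_mem A B a b i j hvert _ hN1
  obtain ⟨hx2, hne2', -⟩ := nbhd_mem A B a b i j hvert _ hN2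
  obtain ⟨hx3, hne3', -⟩ := nbhd_mem A B a b i j hvert _ hN3
  obtain ⟨hx4, hne4', -⟩ := nbhd_mem A B a b i j hvert _ hN4
  obtain ⟨hx5, hne5', -⟩ := nbhd_mem A B a b i j hvert _ hN5
  obtain ⟨hx6, hne6', -⟩ := nbhd_mem A B a b i j hvert _ hN6
  obtain ⟨hv1a, hv1b, hv1c, hv1d⟩ :
      i + 1 < n ∧ q1 + 1 < n ∧ a i = b q1 ∧ a (i+1) = b (q1+1) := hx1
  obtain ⟨hv2a, hv2b, hv2c, hv2d⟩ :
      p2 + 1 < n ∧ q2 + 1 < n ∧ a p2 = b q2 ∧ a (p2+1) = b (q2+1) := hx2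
  obtain ⟨hv3a, hv3b, hv3c, hv3d⟩ :
      p3 + 1 < n ∧ q3 + 1 < n ∧ a p3 = b q3 ∧ a (p3+1) = b (q3+1) := hx3
  obtain ⟨hv4a, hv4b, hv4c, hv4d⟩ :
      p4 + 1 < n ∧ j + 1 < n ∧ a p4 = b j ∧ a (p4+1) = b (j+1) := hx4
  obtain ⟨hv5a, hv5b, hv5c, hv5d⟩ :
      p5 + 1 < n ∧ q5 + 1 < n ∧ a p5 = b q5 ∧ a (p5+1) = b (q5+1) := hx5
  obtain ⟨hv6a, hv6b, hv6c, hv6d⟩ :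
      p6 + 1 < n ∧ q6 + 1 < n ∧ a p6 = b q6 ∧ a (p6+1) = b (q6+1) := hx6
  have he2a : (p2 : ℤ) = (i : ℤ) + 1 := he2
  have he2b : (q2 : ℤ) ≠ (j : ℤ) + 1 := he2'
  have he3a : (p3 : ℤ) = (i : ℤ) - 1 := he3
  have he3b : (q3 : ℤ) ≠ (j : ℤ) - 1 := he3'
  have he5a : (q5 : ℤ) = (j : ℤ) + 1 := he5
  have he5b : (p5 : ℤ) ≠ (i : ℤ) + 1 := he5'
  have he6a : (q6 : ℤ) = (j : ℤ) - 1 := he6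
  have he6b : (p6 : ℤ) ≠ (i : ℤ) - 1 := he6'
  have hj'ne : q1 ≠ j := fun h => hne1' (by rw [h])
  have hi'ne : p4 ≠ i := fun h => hne4' (by rw [h])
  have ep2 : p2 = i + 1 := by omega
  subst ep2
  have eq2 : q2 = q1 + 1 := by
    rcases occb (x := q2) (y := q1 + 1) (z := j + 1) (by omega) (by omega) (by omega)
        hv2c.symm hv1d.symm hvB.symm with h | h | h
    · exact h
    · exact absurd h (by omega)
    · exact absurd h (by omega)
  subst eq2
  have hige : 1 ≤ i := by omega
  have ep3 : p3 + 1 = i := by omega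
  rw [ep3] at hv3d
  have eq3 : q3 + 1 = q1 := by
    rcases occb (x := q3 + 1) (y := q1) (z := j) (by omega) (by omega) (by omega)
        hv3d.symm hv1c.symm hvA.symm with h | h | h
    · exact h
    · exact absurd h (by omega)
    · exact absurd h (by omega)
  have hq1ge : 1 ≤ q1 := by omega
  have eq5 : q5 = j + 1 := by omega
  subst eq5
  have ep5 : p5 = p4 + 1 := by
    rcases occa (x := p5) (y := p4 + 1) (z := i + 1) (by omega) (by omega) (by omega)
        hv5c hv4d hvB with h | h | h
    · exact h
    · exact absurd h (by omega)
    · exact absurd h (by omega)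
  subst ep5
  have hjge : 1 ≤ j := by omega
  have eq6 : q6 + 1 = j := by omega
  rw [eq6] at hv6d
  have ep6 : p6 + 1 = p4 := by
    rcases occa (x := p6 + 1) (y := p4) (z := i) (by omega) (by omega) (by omega)
        hv6d hv4c hvA with h | h | h
    · exact h
    · exact absurd h (by omega)
    · exact absurd h (by omega)
  have hp4ge : 1 ≤ p4 := by omega
  refine ⟨p4, q1, hige, hjge, hp4ge, hq1ge, hv4a, hv1b, hi'ne, hj'ne,
    hv1c, hv1d, hv4c, hv4d, ?_, hN1, hN2, ?_, hN4, hN5⟩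
  · have e : ((i-1 : ℕ), (q1-1 : ℕ)) = ((p3, q3) : ℕ × ℕ) := by
      rw [Prod.mk.injEq]; exact ⟨by omega, by omega⟩
    rw [e]; exact hN3
  · have e : ((p4-1 : ℕ), (j-1 : ℕ)) = ((p6, q6) : ℕ × ℕ) := by
      rw [Prod.mk.injEq]; exact ⟨by omega, by omega⟩
    rw [e]; exact hN6

lemma nbhd_eq {i' j' : ℕ}
    (hvert : ∀ x y : ℕ, IsVertex n A B x y ↔
      (x + 1 < n ∧ y + 1 < n ∧ a x = b y ∧ a (x+1) = b (y+1)))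
    (occa : ∀ {x y z : ℕ}, x < n → y < n → z < n → ∀ {c : Γ},
      a x = c → a y = c → a z = c → x = y ∨ x = z ∨ y = z)
    (occb : ∀ {x y z : ℕ}, x < n → y < n → z < n → ∀ {c : Γ},
      b x = c → b y = c → b z = c → x = y ∨ x = z ∨ y = z)
    (hi1 : i + 1 < n) (hj1 : j + 1 < n) (hvA : a i = b j) (hvB : a (i + 1) = b (j + 1))
    (h1i : 1 ≤ i) (h1j : 1 ≤ j) (h1i' : 1 ≤ i') (h1j' : 1 ≤ j')
    (hne_i : i' ≠ i) (hne_j : j' ≠ j)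
    (hm3 : ((i-1 : ℕ), (j'-1 : ℕ)) ∈ Nbhd n A B (i, j))
    (hm1 : (i, j') ∈ Nbhd n A B (i, j))
    (hm2 : (i+1, j'+1) ∈ Nbhd n A B (i, j))
    (hm6 : ((i'-1 : ℕ), (j-1 : ℕ)) ∈ Nbhd n A B (i, j))
    (hm4 : (i', j) ∈ Nbhd n A B (i, j))
    (hm5 : (i'+1, j+1) ∈ Nbhd n A B (i, j)) :
    Nbhd n A B (i, j) =
      ({(i - 1, j' - 1), (i, j'), (i + 1, j' + 1),
        (i' - 1, j - 1), (i', j), (i' + 1, j + 1)} : Set (ℕ × ℕ)) := by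
  apply Set.eq_of_subset_of_subset
  · intro w hw
    simp only [Set.mem_insert_iff, Set.mem_singleton_iff]
    rcases slots_cover A B a b i j hvert w hw with h | h | h | h | h | h
    · have he : w = (i, j') :=
        slot1_sub A B a b i j hvert occb hi1 hj1 hvA hvB h ⟨hm1, rfl⟩
      tauto
    · have he : w = (i+1, j'+1) :=
        slot2_sub A B a b i j hvert occb hi1 hj1 hvA hvB h ⟨hm2, by omega, by omega⟩
      tauto
    · have he : w = ((i-1 : ℕ), (j'-1 : ℕ)) :=
        slot3_sub A B a b i j hvert occb hi1 hj1 hvA hvB h ⟨hm3, by omega, by omega⟩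
      tauto
    · have he : w = (i', j) :=
        slot4_sub A B a b i j hvert occa hi1 hj1 hvA hvB h ⟨hm4, rfl⟩
      tauto
    · have he : w = (i'+1, j+1) :=
        slot5_sub A B a b i j hvert occa hi1 hj1 hvA hvB h ⟨hm5, by omega, by omega⟩
      tauto
    · have he : w = ((i'-1 : ℕ), (j-1 : ℕ)) :=
        slot6_sub A B a b i j hvert occa hi1 hj1 hvA hvB h ⟨hm6, by omega, by omega⟩
      tauto
  · intro w hw
    simp only [Set.mem_insert_iff, Set.mem_singleton_iff] at hw
    rcases hw with rfl | rfl | rfl | rfl | rfl | rfl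
    · exact hm3
    · exact hm1
    · exact hm2
    · exact hm6
    · exact hm4
    · exact hm5

lemma nbhd_eq' {i' j' : ℕ}
    (hvert : ∀ x y : ℕ, IsVertex n A B x y ↔
      (x + 1 < n ∧ y + 1 < n ∧ a x = b y ∧ a (x+1) = b (y+1)))
    (occa : ∀ {x y z : ℕ}, x < n → y < n → z < n → ∀ {c : Γ},
      a x = c → a y = c → a z = c → x = y ∨ x = z ∨ y = z)
    (occb : ∀ {x y z : ℕ}, x < n → y < n → z < n → ∀ {c : Γ},
      b x = c → b y = c → b z = c → x = y ∨ x = z ∨ y = z)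
    (hi1 : i + 1 < n) (hj1 : j + 1 < n) (hvA : a i = b j) (hvB : a (i + 1) = b (j + 1))
    (h1i : 1 ≤ i) (h1j : 1 ≤ j) (h1i' : 1 ≤ i') (h1j' : 1 ≤ j')
    (hi'1 : i' + 1 < n) (hj'1 : j' + 1 < n)
    (hne_i : i' ≠ i) (hne_j : j' ≠ j)
    (hv1c : a i = b j') (hv1d : a (i+1) = b (j'+1))
    (hv4c : a i' = b j) (hv4d : a (i'+1) = b (j+1))
    (hm3 : ((i-1 : ℕ), (j'-1 : ℕ)) ∈ Nbhd n A B (i, j))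
    (hm1 : (i, j') ∈ Nbhd n A B (i, j))
    (hm2 : (i+1, j'+1) ∈ Nbhd n A B (i, j))
    (hm6 : ((i'-1 : ℕ), (j-1 : ℕ)) ∈ Nbhd n A B (i, j))
    (hm4 : (i', j) ∈ Nbhd n A B (i, j))
    (hm5 : (i'+1, j+1) ∈ Nbhd n A B (i, j)) :
    Nbhd n A B (i', j') =
      ({(i - 1, j' - 1), (i, j'), (i + 1, j' + 1),
        (i' - 1, j - 1), (i', j), (i' + 1, j + 1)} : Set (ℕ × ℕ)) := by
  have hc1 : a i' = b j' := hv4c.trans (hvA.symm.trans hv1c)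
  have hc2 : a (i' + 1) = b (j' + 1) := hv4d.trans (hvB.symm.trans hv1d)
  have hvij' : IsVertex n A B i' j' := (hvert _ _).mpr ⟨hi'1, hj'1, hc1, hc2⟩
  apply Set.eq_of_subset_of_subset
  · rintro ⟨w1, w2⟩ hw
    obtain ⟨-, hvw, hne, p, hp, hcase⟩ := hw
    obtain ⟨hwa, hwb, hwc, hwd⟩ :
        w1 + 1 < n ∧ w2 + 1 < n ∧ a w1 = b w2 ∧ a (w1+1) = b (w2+1) := (hvert w1 w2).mp hvw
    simp only [Set.mem_insert_iff, Set.mem_singleton_iff, Prod.mk.injEq]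
    rcases hp with rfl | rfl | rfl
    · rcases hcase with ⟨h1, h2'⟩ | ⟨h1, h2'⟩
      · -- row i' - 1 : w1 + 1 = i'
        have ew : w1 + 1 = i' := by omega
        rw [ew] at hwd
        rcases occb (x := w2 + 1) (y := j) (z := j') (by omega) (by omega) (by omega)
            hwd.symm hv4c.symm hc1.symm with h | h | h
        · omega
        · exact absurd h (by omega)
        · exact absurd h (by omega)
      · -- column j' - 1 : w2 + 1 = j'
        have ew : w2 + 1 = j' := by omega
        rw [ew] at hwd
        rcases occa (x := w1 + 1) (y := i) (z := i') (by omega) (by omega) (by omega)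
            hwd hv1c hc1 with h | h | h
        · omega
        · exact absurd h (by omega)
        · exact absurd h (by omega)
    · rcases hcase with ⟨h1, h2'⟩ | ⟨h1, h2'⟩
      · -- row i' : w1 = i', w2 = j
        have ew : w1 = i' := by omega
        rw [ew] at hwc
        have hwne : w2 ≠ j' := by omega
        rcases occb (x := w2) (y := j) (z := j') (by omega) (by omega) (by omega)
            hwc.symm hv4c.symm hc1.symm with h | h | h
        · omega
        · exact absurd h hwne
        · exact absurd h (Ne.symm hne_j)
      · -- column j' : w2 = j', w1 = i
        have ew : w2 = j' := by omega
        rw [ew] at hwc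
        have hwne : w1 ≠ i' := by omega
        rcases occa (x := w1) (y := i) (z := i') (by omega) (by omega) (by omega)
            hwc hv1c hc1 with h | h | h
        · omega
        · exact absurd h hwne
        · exact absurd h (Ne.symm hne_i)
    · rcases hcase with ⟨h1, h2'⟩ | ⟨h1, h2'⟩
      · -- row i' + 1 : w1 = i' + 1, w2 = j + 1
        have ew : w1 = i' + 1 := by omega
        rw [ew] at hwc
        rcases occb (x := w2) (y := j + 1) (z := j' + 1) (by omega) (by omega) (by omega)
            hwc.symm hv4d.symm hc2.symm with h | h | h
        · omega
        · exact absurd h (by omega)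
        · exact absurd h (by omega)
      · -- column j' + 1 : w2 = j' + 1, w1 = i + 1
        have ew : w2 = j' + 1 := by omega
        rw [ew] at hwc
        rcases occa (x := w1) (y := i + 1) (z := i' + 1) (by omega) (by omega) (by omega)
            hwc hv1d hc2 with h | h | h
        · omega
        · exact absurd h (by omega)
        · exact absurd h (by omega)
  · intro w hw
    simp only [Set.mem_insert_iff, Set.mem_singleton_iff] at hw
    obtain ⟨-, hvw3, -, -⟩ := hm3
    obtain ⟨-, hvw1, -, -⟩ := hm1
    obtain ⟨-, hvw2, -, -⟩ := hm2
    obtain ⟨-, hvw6, -, -⟩ := hm6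
    obtain ⟨-, hvw4, -, -⟩ := hm4
    obtain ⟨-, hvw5, -, -⟩ := hm5
    rcases hw with rfl | rfl | rfl | rfl | rfl | rfl
    · refine ⟨hvij', hvw3, ?_, -1, Or.inl rfl, Or.inr ⟨by omega, by omega⟩⟩
      intro hcon
      rw [Prod.mk.injEq] at hcon
      omega
    · refine ⟨hvij', hvw1, ?_, 0, Or.inr (Or.inl rfl), Or.inr ⟨by omega, by omega⟩⟩
      intro hcon
      rw [Prod.mk.injEq] at hcon
      omega
    · refine ⟨hvij', hvw2, ?_, 1, Or.inr (Or.inr rfl), Or.inr ⟨by omega, by omega⟩⟩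
      intro hcon
      rw [Prod.mk.injEq] at hcon
      omega
    · refine ⟨hvij', hvw6, ?_, -1, Or.inl rfl, Or.inl ⟨by omega, by omega⟩⟩
      intro hcon
      rw [Prod.mk.injEq] at hcon
      omega
    · refine ⟨hvij', hvw4, ?_, 0, Or.inr (Or.inl rfl), Or.inl ⟨by omega, by omega⟩⟩
      intro hcon
      rw [Prod.mk.injEq] at hcon
      omega
    · refine ⟨hvij', hvw5, ?_, 1, Or.inr (Or.inr rfl), Or.inl ⟨by omega, by omega⟩⟩
      intro hcon
      rw [Prod.mk.injEq] at hcon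
      omega

end Main

theorem stmt_8 {Γ : Type*} (n : ℕ) (hn : 2 ≤ n) (A B : Fin n → Γ)
    (σ : Equiv.Perm (Fin n)) (hB : B = A ∘ σ)
    (h2 : ∀ c : Γ, {x : Fin n | A x = c}.ncard ≤ 2)
    (i j : ℕ) (hv : IsVertex n A B i j)
    (hdeg : (Nbhd n A B (i, j)).ncard = 6) :
    ∃ i' j' : ℕ, i' ≠ i ∧ j' ≠ j ∧ IsConflictSquare n A B i i' j j' ∧
      (Nbhd n A B (i', j')).ncard = 6 ∧
      Nbhd n A B (i, j) = Nbhd n A B (i', j') ∧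
      Nbhd n A B (i, j) =
        ({(i - 1, j' - 1), (i, j'), (i + 1, j' + 1),
          (i' - 1, j - 1), (i', j), (i' + 1, j + 1)} : Set (ℕ × ℕ)) := by
  have hn0 : 0 < n := by omega
  have h2B : ∀ c : Γ, {x : Fin n | B x = c}.ncard ≤ 2 := by
    intro c
    have himg : {x : Fin n | B x = c} = σ.symm '' {x : Fin n | A x = c} := by
      ext x
      simp only [Set.mem_setOf_eq, Set.mem_image, hB, Function.comp_apply]
      constructor
      · intro h; exact ⟨σ x, h, σ.symm_apply_apply x⟩
      · rintro ⟨y, hy, rfl⟩; rwa [σ.apply_symm_apply]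
    rw [himg, Set.ncard_image_of_injective _ σ.symm.injective]
    exact h2 c
  obtain ⟨a, b, haA, hbB⟩ : ∃ (a b : ℕ → Γ),
      (∀ (x : ℕ) (h : x < n), a x = A ⟨x, h⟩) ∧ (∀ (x : ℕ) (h : x < n), b x = B ⟨x, h⟩) :=
    ⟨fun x => if h : x < n then A ⟨x, h⟩ else A ⟨0, hn0⟩,
     fun x => if h : x < n then B ⟨x, h⟩ else B ⟨0, hn0⟩,
     fun x h => dif_pos h, fun x h => dif_pos h⟩
  have hvert : ∀ x y : ℕ, IsVertex n A B x y ↔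
      (x + 1 < n ∧ y + 1 < n ∧ a x = b y ∧ a (x+1) = b (y+1)) := by
    intro x y
    constructor
    · rintro ⟨h1, h3, h4, h5⟩
      refine ⟨h1, h3, ?_, ?_⟩
      · rw [haA _ (Nat.lt_of_succ_lt h1), hbB _ (Nat.lt_of_succ_lt h3)]; exact h4
      · rw [haA _ h1, hbB _ h3]; exact h5
    · rintro ⟨h1, h3, h4, h5⟩
      refine ⟨h1, h3, ?_, ?_⟩
      · rw [← haA _ (Nat.lt_of_succ_lt h1), ← hbB _ (Nat.lt_of_succ_lt h3)]; exact h4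
      · rw [← haA _ h1, ← hbB _ h3]; exact h5
  have occa : ∀ {x y z : ℕ}, x < n → y < n → z < n → ∀ {c : Γ},
      a x = c → a y = c → a z = c → x = y ∨ x = z ∨ y = z := by
    intro x y z hx hy hz c h1 h2' h3
    rw [haA _ hx] at h1; rw [haA _ hy] at h2'; rw [haA _ hz] at h3
    exact two_occ_aux A h2 hx hy hz h1 h2' h3
  have occb : ∀ {x y z : ℕ}, x < n → y < n → z < n → ∀ {c : Γ},
      b x = c → b y = c → b z = c → x = y ∨ x = z ∨ y = z := by
    intro x y z hx hy hz c h1 h2' h3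
    rw [hbB _ hx] at h1; rw [hbB _ hy] at h2'; rw [hbB _ hz] at h3
    exact two_occ_aux B h2B hx hy hz h1 h2' h3
  obtain ⟨hi1, hj1, hvA, hvB⟩ := (hvert i j).mp hv
  obtain ⟨i', j', h1i, h1j, h1i', h1j', hi'1, hj'1, hne_i, hne_j,
      hv1c, hv1d, hv4c, hv4d, hm3, hm1, hm2, hm6, hm4, hm5⟩ :=
    extract hvert occa occb hi1 hj1 hvA hvB hdeg
  have hNL := nbhd_eq hvert occa occb hi1 hj1 hvA hvB h1i h1j h1i' h1j' hne_i hne_j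
    hm3 hm1 hm2 hm6 hm4 hm5
  have hNL' := nbhd_eq' hvert occa occb hi1 hj1 hvA hvB h1i h1j h1i' h1j' hi'1 hj'1
    hne_i hne_j hv1c hv1d hv4c hv4d hm3 hm1 hm2 hm6 hm4 hm5
  have hvij' : IsVertex n A B i' j' :=
    (hvert _ _).mpr ⟨hi'1, hj'1, hv4c.trans (hvA.symm.trans hv1c),
      hv4d.trans (hvB.symm.trans hv1d)⟩
  obtain ⟨-, hvw1, -, -⟩ := hm1
  obtain ⟨-, hvw4, -, -⟩ := hm4
  refine ⟨i', j', hne_i, hne_j,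
    ⟨Ne.symm hne_i, Ne.symm hne_j, hv, hvw1, hvw4, hvij'⟩, ?_, hNL.trans hNL'.symm, hNL⟩
  rw [hNL', ← hNL]
  exact hdeg
end

section
/- Assume every letter occurs at most 2 times in A, and assume the conflict graph G contains no square. Then every vertex of degree exactly 5 in G is adjacent to some vertex of degree exactly 1. -/
section Aux
variable {Γ : Type*} {n : ℕ} {A B : Fin n → Γ}

lemma vtx_symm {i j : ℕ} (h : IsVertex n A B i j) : IsVertex n B A j i := by
  obtain ⟨hi, hj, h1, h2⟩ := h; exact ⟨hj, hi, h1.symm, h2.symm⟩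

lemma adj_swap {v w : ℕ × ℕ} (h : ConflictAdj n A B v w) :
    ConflictAdj n B A v.swap w.swap := by
  obtain ⟨h1, h2, h3, p, hp, h4⟩ := h
  refine ⟨vtx_symm h1, vtx_symm h2, fun e => h3 (Prod.swap_injective e), p, hp, ?_⟩
  rcases h4 with ⟨a, b⟩ | ⟨a, b⟩
  · exact Or.inr ⟨a, b⟩
  · exact Or.inl ⟨a, b⟩

lemma adj_shape {i j a b : ℕ} (hadj : ConflictAdj n A B (i, j) (a, b)) :
    (a = i ∧ b ≠ j) ∨ (b = j ∧ a ≠ i) ∨ (a = i + 1 ∧ b ≠ j + 1) ∨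
    (a + 1 = i ∧ b + 1 ≠ j) ∨ (b = j + 1 ∧ a ≠ i + 1) ∨ (b + 1 = j ∧ a + 1 ≠ i) := by
  obtain ⟨_, _, hne, p, hp, hor⟩ := hadj
  have hne' : ¬(i = a ∧ j = b) := fun ⟨e1, e2⟩ => hne (by rw [e1, e2])
  clear hne
  rcases hp with rfl | rfl | rfl <;> rcases hor with ⟨ha, hb⟩ | ⟨ha, hb⟩ <;> omega

lemma adj_mk {i j a b : ℕ} (hv : IsVertex n A B i j) (hw : IsVertex n A B a b)
    (hcond : (a = i ∧ b ≠ j) ∨ (b = j ∧ a ≠ i) ∨ (a = i + 1 ∧ b ≠ j + 1) ∨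
      (a + 1 = i ∧ b + 1 ≠ j) ∨ (b = j + 1 ∧ a ≠ i + 1) ∨ (b + 1 = j ∧ a + 1 ≠ i)) :
    ConflictAdj n A B (i, j) (a, b) := by
  refine ⟨hv, hw, ?_, ?_⟩
  · intro e
    rw [Prod.mk.injEq] at e
    omega
  · rcases hcond with ⟨h1, h2⟩ | ⟨h1, h2⟩ | ⟨h1, h2⟩ | ⟨h1, h2⟩ | ⟨h1, h2⟩ | ⟨h1, h2⟩
    · exact ⟨0, by norm_num, Or.inl ⟨by omega, by omega⟩⟩
    · exact ⟨0, by norm_num, Or.inr ⟨by omega, by omega⟩⟩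
    · exact ⟨1, by norm_num, Or.inl ⟨by omega, by omega⟩⟩
    · exact ⟨-1, by norm_num, Or.inl ⟨by omega, by omega⟩⟩
    · exact ⟨1, by norm_num, Or.inr ⟨by omega, by omega⟩⟩
    · exact ⟨-1, by norm_num, Or.inr ⟨by omega, by omega⟩⟩

lemma pick {α : Type*} [Inhabited α] {S C : Set α} (h : ∀ w ∈ S, ∀ w' ∈ S, w ∈ C → w' ∈ C → w = w') :
    ∃ a, ∀ w ∈ S, w ∈ C → w = a := by
  by_cases hne : ∃ w, w ∈ S ∧ w ∈ C
  · obtain ⟨a, haS, haC⟩ := hne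
    exact ⟨a, fun w hw hwC => h w hw a haS hwC haC⟩
  · exact ⟨default, fun w hw hwC => absurd ⟨w, hw, hwC⟩ hne⟩

lemma card_le_four {α : Type*} [Inhabited α] {S : Set α} {a1 a2 a3 a4 : α}
    (h : S ⊆ {a1, a2, a3, a4}) : S.ncard ≤ 4 := by
  refine (Set.ncard_le_ncard h (Set.toFinite _)).trans ?_
  refine (Set.ncard_insert_le _ _).trans ?_
  have h2 : ({a2, a3, a4} : Set α).ncard ≤ 3 := by
    refine (Set.ncard_insert_le _ _).trans ?_
    have h3 : ({a3, a4} : Set α).ncard ≤ 2 := by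
      refine (Set.ncard_insert_le _ _).trans ?_
      simp [Set.ncard_singleton]
    omega
  omega
end Aux

section Main
variable {Γ : Type*} {n : ℕ} {A B : Fin n → Γ}

lemma occ_of_card (h2 : ∀ c : Γ, {x : Fin n | A x = c}.ncard ≤ 2) :
    ∀ x y z : Fin n, A x = A y → A x = A z → x = y ∨ x = z ∨ y = z := by
  intro x y z e1 e2
  by_contra hc
  push_neg at hc
  obtain ⟨hxy, hxz, hyz⟩ := hc
  have hsub : ({x, y, z} : Set (Fin n)) ⊆ {t | A t = A x} := by
    intro t ht
    simp only [Set.mem_insert_iff, Set.mem_singleton_iff] at ht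
    rcases ht with rfl | rfl | rfl
    · rfl
    · exact e1.symm
    · exact e2.symm
  have h3 : ({x, y, z} : Set (Fin n)).ncard = 3 :=
    Set.ncard_eq_three.mpr ⟨x, y, z, hxy, hxz, hyz, rfl⟩
  have h4 := Set.ncard_le_ncard hsub (Set.toFinite _)
  have h5 := h2 (A x)
  omega

lemma classes
    (occA : ∀ x y z : Fin n, A x = A y → A x = A z → x = y ∨ x = z ∨ y = z)
    (occB : ∀ x y z : Fin n, B x = B y → B x = B z → x = y ∨ x = z ∨ y = z)
    (hnosq : ∀ a b c d : ℕ, ¬ IsConflictSquare n A B a b c d)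
    {i j : ℕ} (hv : IsVertex n A B i j)
    (hcard : (Nbhd n A B (i, j)).ncard = 5) :
    (∃ w ∈ Nbhd n A B (i, j), w.1 = i ∨ w.2 = j) ∧
    (∃ w ∈ Nbhd n A B (i, j), w.1 = i + 1) ∧
    (∃ w ∈ Nbhd n A B (i, j), w.1 + 1 = i) ∧
    (∃ w ∈ Nbhd n A B (i, j), w.2 = j + 1) ∧
    (∃ w ∈ Nbhd n A B (i, j), w.2 + 1 = j) := by
  obtain ⟨hi1, hj1, v1, v2⟩ := id hv
  set S := Nbhd n A B (i, j) with hSdef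
  -- uniqueness within each class
  have uniq0 : ∀ w ∈ S, ∀ w' ∈ S, (w.1 = i ∨ w.2 = j) → (w'.1 = i ∨ w'.2 = j) → w = w' := by
    rintro ⟨a, b⟩ hw ⟨a', b'⟩ hw' hc hc'
    have hshape := adj_shape hw
    have hshape' := adj_shape hw'
    have hwv : IsVertex n A B a b := hw.2.1
    have hw'v : IsVertex n A B a' b' := hw'.2.1
    obtain ⟨p1, p2, e1, e2⟩ := hwv
    obtain ⟨q1, q2, f1, f2⟩ := hw'v
    dsimp only at hc hc'
    rcases hc with hc | hc <;> rcases hc' with hc' | hc'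
    · -- both row i
      obtain rfl := hc.symm
      obtain rfl := hc'.symm
      have hb : b ≠ j := by omega
      have hb' : b' ≠ j := by omega
      rcases occB ⟨b, Nat.lt_of_succ_lt p2⟩ ⟨b', Nat.lt_of_succ_lt q2⟩
          ⟨j, Nat.lt_of_succ_lt hj1⟩ (e1.symm.trans f1) (e1.symm.trans v1) with h | h | h <;>
        simp only [Fin.mk.injEq] at h
      · simp [h]
      · omega
      · omega
    · -- row i and column j : square
      obtain rfl := hc.symm
      obtain rfl := hc'.symm
      have hb : b ≠ j := by omega
      have ha' : a' ≠ i := by omega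
      have hnew : IsVertex n A B a' b :=
        ⟨q1, p2, f1.trans (v1.symm.trans e1), f2.trans (v2.symm.trans e2)⟩
      exact absurd (⟨by omega, by omega, hv, ⟨p1, p2, e1, e2⟩, ⟨q1, q2, f1, f2⟩, hnew⟩ :
        IsConflictSquare n A B i a' j b) (hnosq i a' j b)
    · -- column j and row i : square
      obtain rfl := hc.symm
      obtain rfl := hc'.symm
      have hb' : b' ≠ j := by omega
      have ha : a ≠ i := by omega
      have hnew : IsVertex n A B a b' :=
        ⟨p1, q2, e1.trans (v1.symm.trans f1), e2.trans (v2.symm.trans f2)⟩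
      exact absurd (⟨by omega, by omega, hv, ⟨q1, q2, f1, f2⟩, ⟨p1, p2, e1, e2⟩, hnew⟩ :
        IsConflictSquare n A B i a j b') (hnosq i a j b')
    · -- both column j
      obtain rfl := hc.symm
      obtain rfl := hc'.symm
      have ha : a ≠ i := by omega
      have ha' : a' ≠ i := by omega
      rcases occA ⟨a, Nat.lt_of_succ_lt p1⟩ ⟨a', Nat.lt_of_succ_lt q1⟩
          ⟨i, Nat.lt_of_succ_lt hi1⟩ (e1.trans f1.symm) (e1.trans v1.symm) with h | h | h <;>
        simp only [Fin.mk.injEq] at h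
      · simp [h]
      · omega
      · omega
  have uniq2 : ∀ w ∈ S, ∀ w' ∈ S, w.1 = i + 1 → w'.1 = i + 1 → w = w' := by
    rintro ⟨a, b⟩ hw ⟨a', b'⟩ hw' hc hc'
    have hshape := adj_shape hw
    have hshape' := adj_shape hw'
    have hwv : IsVertex n A B a b := hw.2.1
    have hw'v : IsVertex n A B a' b' := hw'.2.1
    obtain ⟨p1, p2, e1, e2⟩ := hwv
    obtain ⟨q1, q2, f1, f2⟩ := hw'v
    dsimp only at hc hc'
    subst hc hc'
    have hb : b ≠ j + 1 := by omega
    have hb' : b' ≠ j + 1 := by omega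
    rcases occB ⟨b, Nat.lt_of_succ_lt p2⟩ ⟨b', Nat.lt_of_succ_lt q2⟩ ⟨j + 1, hj1⟩
        (e1.symm.trans f1) (e1.symm.trans v2) with h | h | h <;>
      simp only [Fin.mk.injEq] at h
    · simp [h]
    · omega
    · omega
  have uniq3 : ∀ w ∈ S, ∀ w' ∈ S, w.1 + 1 = i → w'.1 + 1 = i → w = w' := by
    rintro ⟨a, b⟩ hw ⟨a', b'⟩ hw' hc hc'
    have hshape := adj_shape hw
    have hshape' := adj_shape hw'
    have hwv : IsVertex n A B a b := hw.2.1
    have hw'v : IsVertex n A B a' b' := hw'.2.1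
    obtain ⟨p1, p2, e1, e2⟩ := hwv
    obtain ⟨q1, q2, f1, f2⟩ := hw'v
    dsimp only at hc hc'
    have hb : b + 1 ≠ j := by omega
    have hb' : b' + 1 ≠ j := by omega
    have ea : (⟨a + 1, p1⟩ : Fin n) = ⟨i, Nat.lt_of_succ_lt hi1⟩ := Fin.ext hc
    have ea' : (⟨a' + 1, q1⟩ : Fin n) = ⟨i, Nat.lt_of_succ_lt hi1⟩ := Fin.ext hc'
    rw [ea] at e2
    rw [ea'] at f2
    rcases occB ⟨b + 1, p2⟩ ⟨b' + 1, q2⟩ ⟨j, Nat.lt_of_succ_lt hj1⟩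
        (e2.symm.trans f2) (e2.symm.trans v1) with h | h | h <;>
      simp only [Fin.mk.injEq] at h
    · simp only [Prod.mk.injEq]; omega
    · omega
    · omega
  have uniq4 : ∀ w ∈ S, ∀ w' ∈ S, w.2 = j + 1 → w'.2 = j + 1 → w = w' := by
    rintro ⟨a, b⟩ hw ⟨a', b'⟩ hw' hc hc'
    have hshape := adj_shape hw
    have hshape' := adj_shape hw'
    have hwv : IsVertex n A B a b := hw.2.1
    have hw'v : IsVertex n A B a' b' := hw'.2.1
    obtain ⟨p1, p2, e1, e2⟩ := hwv
    obtain ⟨q1, q2, f1, f2⟩ := hw'v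
    dsimp only at hc hc'
    subst hc hc'
    have ha : a ≠ i + 1 := by omega
    have ha' : a' ≠ i + 1 := by omega
    rcases occA ⟨a, Nat.lt_of_succ_lt p1⟩ ⟨a', Nat.lt_of_succ_lt q1⟩ ⟨i + 1, hi1⟩
        (e1.trans f1.symm) (e1.trans v2.symm) with h | h | h <;>
      simp only [Fin.mk.injEq] at h
    · simp [h]
    · omega
    · omega
  have uniq5 : ∀ w ∈ S, ∀ w' ∈ S, w.2 + 1 = j → w'.2 + 1 = j → w = w' := by
    rintro ⟨a, b⟩ hw ⟨a', b'⟩ hw' hc hc'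
    have hshape := adj_shape hw
    have hshape' := adj_shape hw'
    have hwv : IsVertex n A B a b := hw.2.1
    have hw'v : IsVertex n A B a' b' := hw'.2.1
    obtain ⟨p1, p2, e1, e2⟩ := hwv
    obtain ⟨q1, q2, f1, f2⟩ := hw'v
    dsimp only at hc hc'
    have ha : a + 1 ≠ i := by omega
    have ha' : a' + 1 ≠ i := by omega
    have eb : (⟨b + 1, p2⟩ : Fin n) = ⟨j, Nat.lt_of_succ_lt hj1⟩ := Fin.ext hc
    have eb' : (⟨b' + 1, q2⟩ : Fin n) = ⟨j, Nat.lt_of_succ_lt hj1⟩ := Fin.ext hc'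
    rw [eb] at e2
    rw [eb'] at f2
    rcases occA ⟨a + 1, p1⟩ ⟨a' + 1, q1⟩ ⟨i, Nat.lt_of_succ_lt hi1⟩
        (e2.trans f2.symm) (e2.trans v1.symm) with h | h | h <;>
      simp only [Fin.mk.injEq] at h
    · simp only [Prod.mk.injEq]; omega
    · omega
    · omega
  have cover : ∀ w ∈ S, (w.1 = i ∨ w.2 = j) ∨ w.1 = i + 1 ∨ w.1 + 1 = i ∨
      w.2 = j + 1 ∨ w.2 + 1 = j := by
    rintro ⟨a, b⟩ hw
    have := adj_shape hw
    dsimp only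
    omega
  refine ⟨?_, ?_, ?_, ?_, ?_⟩
  · by_contra hno
    push_neg at hno
    obtain ⟨a2, ha2⟩ := pick (S := S) (C := {w | w.1 = i + 1}) uniq2
    obtain ⟨a3, ha3⟩ := pick (S := S) (C := {w | w.1 + 1 = i}) uniq3
    obtain ⟨a4, ha4⟩ := pick (S := S) (C := {w | w.2 = j + 1}) uniq4
    obtain ⟨a5, ha5⟩ := pick (S := S) (C := {w | w.2 + 1 = j}) uniq5
    have hsub : S ⊆ {a2, a3, a4, a5} := by
      intro w hw
      rcases cover w hw with h0 | hc | hc | hc | hc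
      · rcases h0 with h0 | h0
        · exact absurd h0 (hno w hw).1
        · exact absurd h0 (hno w hw).2
      · simp [ha2 w hw hc]
      · simp [ha3 w hw hc]
      · simp [ha4 w hw hc]
      · simp [ha5 w hw hc]
    have := card_le_four hsub
    omega
  · by_contra hno
    push_neg at hno
    obtain ⟨a0, ha0⟩ := pick (S := S) (C := {w | w.1 = i ∨ w.2 = j}) uniq0
    obtain ⟨a3, ha3⟩ := pick (S := S) (C := {w | w.1 + 1 = i}) uniq3
    obtain ⟨a4, ha4⟩ := pick (S := S) (C := {w | w.2 = j + 1}) uniq4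
    obtain ⟨a5, ha5⟩ := pick (S := S) (C := {w | w.2 + 1 = j}) uniq5
    have hsub : S ⊆ {a0, a3, a4, a5} := by
      intro w hw
      rcases cover w hw with h0 | hc | hc | hc | hc
      · simp [ha0 w hw h0]
      · exact absurd hc (hno w hw)
      · simp [ha3 w hw hc]
      · simp [ha4 w hw hc]
      · simp [ha5 w hw hc]
    have := card_le_four hsub
    omega
  · by_contra hno
    push_neg at hno
    obtain ⟨a0, ha0⟩ := pick (S := S) (C := {w | w.1 = i ∨ w.2 = j}) uniq0
    obtain ⟨a2, ha2⟩ := pick (S := S) (C := {w | w.1 = i + 1}) uniq2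
    obtain ⟨a4, ha4⟩ := pick (S := S) (C := {w | w.2 = j + 1}) uniq4
    obtain ⟨a5, ha5⟩ := pick (S := S) (C := {w | w.2 + 1 = j}) uniq5
    have hsub : S ⊆ {a0, a2, a4, a5} := by
      intro w hw
      rcases cover w hw with h0 | hc | hc | hc | hc
      · simp [ha0 w hw h0]
      · simp [ha2 w hw hc]
      · exact absurd hc (hno w hw)
      · simp [ha4 w hw hc]
      · simp [ha5 w hw hc]
    have := card_le_four hsub
    omega
  · by_contra hno
    push_neg at hno
    obtain ⟨a0, ha0⟩ := pick (S := S) (C := {w | w.1 = i ∨ w.2 = j}) uniq0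
    obtain ⟨a2, ha2⟩ := pick (S := S) (C := {w | w.1 = i + 1}) uniq2
    obtain ⟨a3, ha3⟩ := pick (S := S) (C := {w | w.1 + 1 = i}) uniq3
    obtain ⟨a5, ha5⟩ := pick (S := S) (C := {w | w.2 + 1 = j}) uniq5
    have hsub : S ⊆ {a0, a2, a3, a5} := by
      intro w hw
      rcases cover w hw with h0 | hc | hc | hc | hc
      · simp [ha0 w hw h0]
      · simp [ha2 w hw hc]
      · simp [ha3 w hw hc]
      · exact absurd hc (hno w hw)
      · simp [ha5 w hw hc]
    have := card_le_four hsub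
    omega
  · by_contra hno
    push_neg at hno
    obtain ⟨a0, ha0⟩ := pick (S := S) (C := {w | w.1 = i ∨ w.2 = j}) uniq0
    obtain ⟨a2, ha2⟩ := pick (S := S) (C := {w | w.1 = i + 1}) uniq2
    obtain ⟨a3, ha3⟩ := pick (S := S) (C := {w | w.1 + 1 = i}) uniq3
    obtain ⟨a4, ha4⟩ := pick (S := S) (C := {w | w.2 = j + 1}) uniq4
    have hsub : S ⊆ {a0, a2, a3, a4} := by
      intro w hw
      rcases cover w hw with h0 | hc | hc | hc | hc
      · simp [ha0 w hw h0]
      · simp [ha2 w hw hc]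
      · simp [ha3 w hw hc]
      · simp [ha4 w hw hc]
      · exact absurd hc (hno w hw)
    have := card_le_four hsub
    omega
end Main

section Core
variable {Γ : Type*} {n : ℕ} {A B : Fin n → Γ}

lemma core
    (occA : ∀ x y z : Fin n, A x = A y → A x = A z → x = y ∨ x = z ∨ y = z)
    (occB : ∀ x y z : Fin n, B x = B y → B x = B z → x = y ∨ x = z ∨ y = z)
    (hnosq : ∀ a b c d : ℕ, ¬ IsConflictSquare n A B a b c d)
    {i j y : ℕ}
    (hv : IsVertex n A B i j)
    (huv : ConflictAdj n A B (i, j) (i, y))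
    (h2e : ∃ w ∈ Nbhd n A B (i, j), w.1 = i + 1)
    (h3e : ∃ w ∈ Nbhd n A B (i, j), w.1 + 1 = i)
    (h4e : ∃ w ∈ Nbhd n A B (i, j), w.2 = j + 1)
    (h5e : ∃ w ∈ Nbhd n A B (i, j), w.2 + 1 = j) :
    Nbhd n A B (i, y) = {(i, j)} := by
  obtain ⟨hi1, hj1, v1, v2⟩ := id hv
  have hu : IsVertex n A B i y := huv.2.1
  obtain ⟨hi1', hy1, u1, u2⟩ := id hu
  have hyj : y ≠ j := by have := adj_shape huv; omega
  -- N3 : the neighbor in row i+1, which must be (i+1, y+1)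
  obtain ⟨⟨a3, t⟩, hw3, hc3⟩ := h2e
  dsimp only at hc3
  subst hc3
  have ht : t ≠ j + 1 := by have := adj_shape hw3; omega
  obtain ⟨r1, r2, g1, g2⟩ := id (hw3.2.1 : IsVertex n A B (i + 1) t)
  have ht2 : t = y + 1 := by
    rcases occB ⟨t, Nat.lt_of_succ_lt r2⟩ ⟨j + 1, hj1⟩ ⟨y + 1, hy1⟩
        (g1.symm.trans v2) (g1.symm.trans u2) with h | h | h <;>
      simp only [Fin.mk.injEq] at h <;> omega
  subst ht2
  -- N4 : the neighbor (a4, s) with a4 + 1 = i, s + 1 = y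
  obtain ⟨⟨a4, s⟩, hw4, hc4⟩ := h3e
  dsimp only at hc4
  have hs : s + 1 ≠ j := by have := adj_shape hw4; omega
  obtain ⟨m1, m2, k1, k2⟩ := id (hw4.2.1 : IsVertex n A B a4 s)
  have em : (⟨a4 + 1, m1⟩ : Fin n) = ⟨i, Nat.lt_of_succ_lt hi1⟩ := Fin.ext hc4
  have k2r := k2
  rw [em] at k2r
  have hs2 : s + 1 = y := by
    rcases occB ⟨s + 1, m2⟩ ⟨j, Nat.lt_of_succ_lt hj1⟩ ⟨y, Nat.lt_of_succ_lt hy1⟩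
        (k2r.symm.trans v1) (k2r.symm.trans u1) with h | h | h <;>
      simp only [Fin.mk.injEq] at h <;> omega
  -- N5 : the neighbor (x, j+1) with x ≠ i+1
  obtain ⟨⟨x, b5⟩, hw5, hc5⟩ := h4e
  dsimp only at hc5
  subst hc5
  have hx : x ≠ i + 1 := by have := adj_shape hw5; omega
  obtain ⟨n1, n2, l1, l2⟩ := id (hw5.2.1 : IsVertex n A B x (j + 1))
  -- N6 : the neighbor (z, c6) with c6 + 1 = j, z + 1 ≠ i
  obtain ⟨⟨z, c6⟩, hw6, hc6⟩ := h5e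
  dsimp only at hc6
  have hz : z + 1 ≠ i := by have := adj_shape hw6; omega
  obtain ⟨o1, o2, d1, d2⟩ := id (hw6.2.1 : IsVertex n A B z c6)
  have ec : (⟨c6 + 1, o2⟩ : Fin n) = ⟨j, Nat.lt_of_succ_lt hj1⟩ := Fin.ext hc6
  have d2r := d2
  rw [ec] at d2r
  -- now the extensionality argument
  ext ⟨a, b⟩
  simp only [Set.mem_singleton_iff, Prod.mk.injEq]
  constructor
  · intro hw
    have hshape := adj_shape hw
    obtain ⟨p1, p2, e1, e2⟩ := id (hw.2.1 : IsVertex n A B a b)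
    rcases hshape with ⟨ha, hb⟩ | ⟨hb, ha⟩ | ⟨ha, hb⟩ | ⟨ha, hb⟩ | ⟨hb, ha⟩ | ⟨hb, ha⟩
    · -- same row : w = v
      obtain rfl := ha.symm
      have hbj : b = j := by
        rcases occB ⟨b, Nat.lt_of_succ_lt p2⟩ ⟨j, Nat.lt_of_succ_lt hj1⟩
            ⟨y, Nat.lt_of_succ_lt hy1⟩ (e1.symm.trans v1) (e1.symm.trans u1) with h | h | h <;>
          simp only [Fin.mk.injEq] at h <;> omega
      exact ⟨rfl, hbj⟩
    · -- same column as u : square S(i,a;j,y)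
      obtain rfl := hb.symm
      have hva : IsVertex n A B a j :=
        ⟨p1, hj1, e1.trans (u1.symm.trans v1), e2.trans (u2.symm.trans v2)⟩
      exact absurd (⟨by omega, by omega, hv, hu, hva, hw.2.1⟩ :
        IsConflictSquare n A B i a j y) (hnosq i a j y)
    · -- row i+1 : w = (i+1, j+1), square S(i+1,x;j+1,y+1)
      obtain rfl := ha.symm
      have hbj : b = j + 1 := by
        rcases occB ⟨b, Nat.lt_of_succ_lt p2⟩ ⟨j + 1, hj1⟩ ⟨y + 1, hy1⟩
            (e1.symm.trans v2) (e1.symm.trans u2) with h | h | h <;>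
          simp only [Fin.mk.injEq] at h <;> omega
      subst hbj
      have hxy1 : IsVertex n A B x (y + 1) :=
        ⟨n1, r2, l1.trans (v2.symm.trans u2), l2.trans (e2.symm.trans g2)⟩
      exact absurd (⟨by omega, by omega, hw.2.1, hw3.2.1, hw5.2.1, hxy1⟩ :
        IsConflictSquare n A B (i + 1) x (j + 1) (y + 1)) (hnosq (i + 1) x (j + 1) (y + 1))
    · -- row i-1 : w = (i-1, j-1), square S(a,z;b,s)
      have e2r := e2
      have ea : (⟨a + 1, p1⟩ : Fin n) = ⟨i, Nat.lt_of_succ_lt hi1⟩ := Fin.ext ha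
      rw [ea] at e2r
      have hbj : b + 1 = j := by
        rcases occB ⟨b + 1, p2⟩ ⟨j, Nat.lt_of_succ_lt hj1⟩ ⟨y, Nat.lt_of_succ_lt hy1⟩
            (e2r.symm.trans v1) (e2r.symm.trans u1) with h | h | h <;>
          simp only [Fin.mk.injEq] at h <;> omega
      have haa : a = a4 := by omega
      subst haa
      have hbb : b = c6 := by omega
      subst hbb
      have hzs : IsVertex n A B z s :=
        ⟨o1, m2, d1.trans (e1.symm.trans k1), d2r.trans (v1.symm.trans k2r)⟩
      exact absurd (⟨by omega, by omega, hw.2.1, hw4.2.1, hw6.2.1, hzs⟩ :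
        IsConflictSquare n A B a z b s) (hnosq a z b s)
    · -- column y+1 : w = (x, y+1), square S(i+1,x;j+1,y+1)
      obtain rfl := hb.symm
      have hax : a = x := by
        rcases occA ⟨a, Nat.lt_of_succ_lt p1⟩ ⟨x, Nat.lt_of_succ_lt n1⟩ ⟨i + 1, hi1⟩
            ((e1.trans u2.symm).trans (l1.trans v2.symm).symm) (e1.trans u2.symm)
            with h | h | h <;>
          simp only [Fin.mk.injEq] at h <;> omega
      subst hax
      have hij1 : IsVertex n A B (i + 1) (j + 1) :=
        ⟨r1, n2, v2, g2.trans (e2.symm.trans l2)⟩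
      exact absurd (⟨by omega, by omega, hij1, hw3.2.1, hw5.2.1, hw.2.1⟩ :
        IsConflictSquare n A B (i + 1) a (j + 1) (y + 1)) (hnosq (i + 1) a (j + 1) (y + 1))
    · -- column y-1 : w = (a, y-1), square S(a,a4;b,c6)
      have e2r := e2
      have eb : (⟨b + 1, p2⟩ : Fin n) = ⟨y, Nat.lt_of_succ_lt hy1⟩ := Fin.ext hb
      rw [eb] at e2r
      have haz : a = z := by
        rcases occA ⟨a + 1, p1⟩ ⟨z + 1, o1⟩ ⟨i, Nat.lt_of_succ_lt hi1⟩
            ((e2r.trans u1.symm).trans (d2r.trans v1.symm).symm) (e2r.trans u1.symm)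
            with h | h | h <;>
          simp only [Fin.mk.injEq] at h <;> omega
      subst haz
      have hbs : b = s := by omega
      subst hbs
      have hac : IsVertex n A B a4 c6 :=
        ⟨m1, o2, k1.trans (e1.symm.trans d1), k2.trans (e2.symm.trans d2)⟩
      exact absurd (⟨by omega, by omega, hw.2.1, hw6.2.1, hw4.2.1, hac⟩ :
        IsConflictSquare n A B a a4 b c6) (hnosq a a4 b c6)
  · rintro ⟨rfl, rfl⟩
    exact adj_mk hu hv (Or.inl ⟨rfl, by omega⟩)
end Core


theorem stmt_9 {Γ : Type*} (n : ℕ) (hn : 2 ≤ n) (A B : Fin n → Γ)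
    (σ : Equiv.Perm (Fin n)) (hB : B = A ∘ σ)
    (h2 : ∀ c : Γ, {x : Fin n | A x = c}.ncard ≤ 2)
    (hnosq : ∀ i i' j j' : ℕ, ¬ IsConflictSquare n A B i i' j j') :
    ∀ v : ℕ × ℕ, IsVertex n A B v.1 v.2 → (Nbhd n A B v).ncard = 5 →
      ∃ w : ℕ × ℕ, ConflictAdj n A B v w ∧ (Nbhd n A B w).ncard = 1 := by
  have occA := occ_of_card h2
  have occB : ∀ x y z : Fin n, B x = B y → B x = B z → x = y ∨ x = z ∨ y = z := by
    subst hB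
    intro x y z e1 e2
    rcases occA (σ x) (σ y) (σ z) e1 e2 with h | h | h
    · exact Or.inl (σ.injective h)
    · exact Or.inr (Or.inl (σ.injective h))
    · exact Or.inr (Or.inr (σ.injective h))
  intro v hv hcard
  obtain ⟨i, j⟩ := v
  dsimp only at hv
  obtain ⟨h01, h2e, h3e, h4e, h5e⟩ := classes occA occB hnosq hv hcard
  obtain ⟨u, huS, hu01⟩ := h01
  obtain ⟨u1, u2⟩ := u
  dsimp only at hu01
  rcases hu01 with h | h
  · obtain rfl := h.symm
    refine ⟨(i, u2), huS, ?_⟩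
    rw [core occA occB hnosq hv huS h2e h3e h4e h5e]
    exact Set.ncard_singleton _
  · obtain rfl := h.symm
    have hnosq' : ∀ a b c d : ℕ, ¬ IsConflictSquare n B A a b c d := by
      intro a b c d hsq
      obtain ⟨q1, q2, s1, s2, s3, s4⟩ := hsq
      exact hnosq c d a b ⟨q2, q1, vtx_symm s1, vtx_symm s3, vtx_symm s2, vtx_symm s4⟩
    have hv' : IsVertex n B A j i := vtx_symm hv
    have huv' : ConflictAdj n B A (j, i) (j, u1) := adj_swap huS
    have h2e' : ∃ w ∈ Nbhd n B A (j, i), w.1 = j + 1 := by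
      obtain ⟨w, hwS, hwc⟩ := h4e
      exact ⟨w.swap, adj_swap hwS, hwc⟩
    have h3e' : ∃ w ∈ Nbhd n B A (j, i), w.1 + 1 = j := by
      obtain ⟨w, hwS, hwc⟩ := h5e
      exact ⟨w.swap, adj_swap hwS, hwc⟩
    have h4e' : ∃ w ∈ Nbhd n B A (j, i), w.2 = i + 1 := by
      obtain ⟨w, hwS, hwc⟩ := h2e
      exact ⟨w.swap, adj_swap hwS, hwc⟩
    have h5e' : ∃ w ∈ Nbhd n B A (j, i), w.2 + 1 = i := by
      obtain ⟨w, hwS, hwc⟩ := h3e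
      exact ⟨w.swap, adj_swap hwS, hwc⟩
    have hres := core occB occA hnosq' hv' huv' h2e' h3e' h4e' h5e'
    refine ⟨(u1, j), huS, ?_⟩
    have hset : Nbhd n A B (u1, j) = {(i, j)} := by
      ext ⟨a, b⟩
      simp only [Set.mem_singleton_iff, Prod.mk.injEq]
      constructor
      · intro hab
        have hmem : ((b, a) : ℕ × ℕ) ∈ Nbhd n B A (j, u1) := adj_swap hab
        rw [hres] at hmem
        simp only [Set.mem_singleton_iff, Prod.mk.injEq] at hmem
        exact ⟨hmem.2, hmem.1⟩
      · rintro ⟨h1, h2⟩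
        have hmem : ((j, i) : ℕ × ℕ) ∈ Nbhd n B A (j, u1) := by rw [hres]; exact rfl
        have hadj := adj_swap hmem
        rw [h1, h2]
        exact hadj
    rw [hset]
    exact Set.ncard_singleton _
end

section
/- Assume every letter occurs at most 2 times in A. If two squares S(i1,i1';j1,j1') and S(i2,i2';j2,j2') share a common member vertex, then they have the same set of member vertices; equivalently, {i1,i1'} = {i2,i2'} and {j1,j1'} = {j2,j2'}. In other words, distinct squares are vertex-disjoint. -/
/-- The four member vertices of the square `S(i,i';j,j')`. -/
def SqMembers (i i' j j' : ℕ) : Set (ℕ × ℕ) :=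
  {(i, j), (i, j'), (i', j), (i', j')}

lemma two_mem_pair {α : Type*} [Finite α] {S : Set α} (hS : S.ncard ≤ 2)
    {a b c d : α} (hab : a ≠ b) (hcd : c ≠ d)
    (ha : a ∈ S) (hb : b ∈ S) (hc : c ∈ S) (hd : d ∈ S) :
    ({a, b} : Set α) = {c, d} := by
  have hfin : S.Finite := Set.toFinite S
  have h1 : ({a, b} : Set α) = S :=
    Set.eq_of_subset_of_ncard_le (by simp [Set.insert_subset_iff, ha, hb])
      (by rwa [Set.ncard_pair hab]) hfin
  have h2 : ({c, d} : Set α) = S :=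
    Set.eq_of_subset_of_ncard_le (by simp [Set.insert_subset_iff, hc, hd])
      (by rwa [Set.ncard_pair hcd]) hfin
  rw [h1, h2]

lemma sq_eq_prod (i i' j j' : ℕ) :
    SqMembers i i' j j' = ({i, i'} : Set ℕ) ×ˢ ({j, j'} : Set ℕ) := by
  ext ⟨x, y⟩
  simp only [SqMembers, Set.mem_insert_iff, Set.mem_singleton_iff, Set.mem_prod,
    Prod.mk.injEq]
  tauto

theorem stmt_10 {Γ : Type*} (n : ℕ) (hn : 2 ≤ n) (A B : Fin n → Γ)
    (σ : Equiv.Perm (Fin n)) (hB : B = A ∘ σ)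
    (h2 : ∀ c : Γ, {x : Fin n | A x = c}.ncard ≤ 2)
    (i1 i1' j1 j1' i2 i2' j2 j2' : ℕ)
    (hS1 : IsConflictSquare n A B i1 i1' j1 j1')
    (hS2 : IsConflictSquare n A B i2 i2' j2 j2')
    (hcommon : ∃ v : ℕ × ℕ, v ∈ SqMembers i1 i1' j1 j1' ∧ v ∈ SqMembers i2 i2' j2 j2') :
    SqMembers i1 i1' j1 j1' = SqMembers i2 i2' j2 j2' ∧
    ({i1, i1'} : Set ℕ) = {i2, i2'} ∧ ({j1, j1'} : Set ℕ) = {j2, j2'} := by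
  have h2B : ∀ c : Γ, {x : Fin n | B x = c}.ncard ≤ 2 := by
    intro c
    have he : {x : Fin n | B x = c} = σ.symm '' {x : Fin n | A x = c} := by
      ext x
      simp only [hB, Set.mem_setOf_eq, Function.comp_apply, Set.mem_image]
      constructor
      · intro h; exact ⟨σ x, h, σ.symm_apply_apply x⟩
      · rintro ⟨y, hy, rfl⟩; simpa using hy
    rw [he, Set.ncard_image_of_injective _ σ.symm.injective]
    exact h2 c
  obtain ⟨hne1, hnej1, V11, V12, V21, V22⟩ := hS1
  obtain ⟨hne2, hnej2, W11, W12, W21, W22⟩ := hS2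
  obtain ⟨hi1, hj1, e11, -⟩ := V11
  obtain ⟨hi1x, hj1', e12, -⟩ := V12
  obtain ⟨hi1', hj1y, e21, -⟩ := V21
  obtain ⟨hi1z, hj1z, e22, -⟩ := V22
  obtain ⟨hi2, hj2, f11, -⟩ := W11
  obtain ⟨hi2x, hj2', f12, -⟩ := W12
  obtain ⟨hi2', hj2y, f21, -⟩ := W21
  obtain ⟨hi2z, hj2z, f22, -⟩ := W22
  obtain ⟨⟨a, b⟩, hv1, hv2⟩ := hcommon
  simp only [SqMembers, Set.mem_insert_iff, Set.mem_singleton_iff, Prod.mk.injEq] at hv1 hv2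
  have ha1 : a = i1 ∨ a = i1' := by
    rcases hv1 with ⟨h, -⟩ | ⟨h, -⟩ | ⟨h, -⟩ | ⟨h, -⟩ <;> simp [h]
  have hb1 : b = j1 ∨ b = j1' := by
    rcases hv1 with ⟨-, h⟩ | ⟨-, h⟩ | ⟨-, h⟩ | ⟨-, h⟩ <;> simp [h]
  have ha2 : a = i2 ∨ a = i2' := by
    rcases hv2 with ⟨h, -⟩ | ⟨h, -⟩ | ⟨h, -⟩ | ⟨h, -⟩ <;> simp [h]
  have hb2 : b = j2 ∨ b = j2' := by
    rcases hv2 with ⟨-, h⟩ | ⟨-, h⟩ | ⟨-, h⟩ | ⟨-, h⟩ <;> simp [h]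
  -- the common letter of the i's
  have hA11' : A ⟨i1, Nat.lt_of_succ_lt hi1⟩ = A ⟨i1', Nat.lt_of_succ_lt hi1'⟩ := by
    rw [e11, e21]
  have hA22' : A ⟨i2, Nat.lt_of_succ_lt hi2⟩ = A ⟨i2', Nat.lt_of_succ_lt hi2'⟩ := by
    rw [f11, f21]
  have hB11' : B ⟨j1, Nat.lt_of_succ_lt hj1⟩ = B ⟨j1', Nat.lt_of_succ_lt hj1'⟩ := by
    rw [← e11, ← e12]
  have hB22' : B ⟨j2, Nat.lt_of_succ_lt hj2⟩ = B ⟨j2', Nat.lt_of_succ_lt hj2'⟩ := by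
    rw [← f11, ← f12]
  have han : a < n := by
    rcases ha1 with rfl | rfl
    · exact Nat.lt_of_succ_lt hi1
    · exact Nat.lt_of_succ_lt hi1'
  have hbn : b < n := by
    rcases hb1 with rfl | rfl
    · exact Nat.lt_of_succ_lt hj1
    · exact Nat.lt_of_succ_lt hj1'
  have hcross : A ⟨i1, Nat.lt_of_succ_lt hi1⟩ = A ⟨i2, Nat.lt_of_succ_lt hi2⟩ := by
    have h1 : A ⟨i1, Nat.lt_of_succ_lt hi1⟩ = B ⟨b, hbn⟩ := by
      rcases hb1 with rfl | rfl
      · exact e11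
      · exact e12
    have h2' : A ⟨i2, Nat.lt_of_succ_lt hi2⟩ = B ⟨b, hbn⟩ := by
      rcases hb2 with rfl | rfl
      · exact f11
      · exact f12
    rw [h1, h2']
  have hcrossB : B ⟨j1, Nat.lt_of_succ_lt hj1⟩ = B ⟨j2, Nat.lt_of_succ_lt hj2⟩ := by
    have h1 : B ⟨j1, Nat.lt_of_succ_lt hj1⟩ = A ⟨a, han⟩ := by
      rcases ha1 with rfl | rfl
      · exact e11.symm
      · exact e21.symm
    have h2' : B ⟨j2, Nat.lt_of_succ_lt hj2⟩ = A ⟨a, han⟩ := by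
      rcases ha2 with rfl | rfl
      · exact f11.symm
      · exact f21.symm
    rw [h1, h2']
  -- pair equality in Fin n for the i's
  set c : Γ := A ⟨i1, Nat.lt_of_succ_lt hi1⟩ with hc
  have hipair : ({(⟨i1, Nat.lt_of_succ_lt hi1⟩ : Fin n), ⟨i1', Nat.lt_of_succ_lt hi1'⟩} :
      Set (Fin n)) = {⟨i2, Nat.lt_of_succ_lt hi2⟩, ⟨i2', Nat.lt_of_succ_lt hi2'⟩} := by
    apply two_mem_pair (S := {x : Fin n | A x = c}) (h2 c)
    · simp [Fin.ext_iff, hne1]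
    · simp [Fin.ext_iff, hne2]
    · simp [hc]
    · exact hA11'.symm
    · exact hcross.symm
    · rw [Set.mem_setOf_eq, ← hA22', ← hcross]
  set c' : Γ := B ⟨j1, Nat.lt_of_succ_lt hj1⟩ with hc'
  have hjpair : ({(⟨j1, Nat.lt_of_succ_lt hj1⟩ : Fin n), ⟨j1', Nat.lt_of_succ_lt hj1'⟩} :
      Set (Fin n)) = {⟨j2, Nat.lt_of_succ_lt hj2⟩, ⟨j2', Nat.lt_of_succ_lt hj2'⟩} := by
    apply two_mem_pair (S := {x : Fin n | B x = c'}) (h2B c')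
    · simp [Fin.ext_iff, hnej1]
    · simp [Fin.ext_iff, hnej2]
    · simp [hc']
    · exact hB11'.symm
    · exact hcrossB.symm
    · rw [Set.mem_setOf_eq, ← hB22', ← hcrossB]
  rw [Set.pair_eq_pair_iff] at hipair hjpair
  simp only [Fin.mk.injEq] at hipair hjpair
  have hiset : ({i1, i1'} : Set ℕ) = {i2, i2'} := by
    rcases hipair with ⟨rfl, rfl⟩ | ⟨rfl, rfl⟩
    · rfl
    · exact Set.pair_comm _ _
  have hjset : ({j1, j1'} : Set ℕ) = {j2, j2'} := by
    rcases hjpair with ⟨rfl, rfl⟩ | ⟨rfl, rfl⟩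
    · rfl
    · exact Set.pair_comm _ _
  refine ⟨?_, hiset, hjset⟩
  rw [sq_eq_prod, sq_eq_prod, hiset, hjset]
end

section
/- Assume every letter occurs at most 2 times in A. Suppose (i,j) and (i+1,j+1) are vertices, (i,j) is a member vertex of a square S1 = S(i1,i1';j1,j1'), (i+1,j+1) is a member vertex of a square S2 = S(i2,i2';j2,j2'), and S1 and S2 have different member-vertex sets. Then the member-vertex set of S2 equals {(a+1, b+1) : (a,b) a member vertex of S1}; that is, the two squares are consecutive. -/
section Aux

variable {Γ : Type*} {n : ℕ} {A B : Fin n → Γ}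

lemma three_le {α : Type*} [Finite α] {S : Set α} {a b c : α}
    (ha : a ∈ S) (hb : b ∈ S) (hc : c ∈ S) (hab : a ≠ b) (h : S.ncard ≤ 2) :
    c = a ∨ c = b := by
  by_contra h'
  push_neg at h'
  have hsub : ({c, a, b} : Set α) ⊆ S := by
    intro x hx; rcases hx with rfl | rfl | rfl <;> assumption
  have h3 : ({c, a, b} : Set α).ncard = 3 := by
    rw [Set.ncard_insert_of_notMem (by simp [h'.1, h'.2]),
      Set.ncard_insert_of_notMem (by simp [hab]), Set.ncard_singleton]
  have := Set.ncard_le_ncard hsub S.toFinite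
  omega

lemma sq_symm_i (h : IsConflictSquare n A B i i' j j') :
    IsConflictSquare n A B i' i j j' :=
  ⟨h.1.symm, h.2.1, h.2.2.2.2.1, h.2.2.2.2.2, h.2.2.1, h.2.2.2.1⟩

lemma sq_symm_j (h : IsConflictSquare n A B i i' j j') :
    IsConflictSquare n A B i i' j' j :=
  ⟨h.1, h.2.1.symm, h.2.2.2.1, h.2.2.1, h.2.2.2.2.2, h.2.2.2.2.1⟩

lemma mem_symm_i (i i' j j' : ℕ) : SqMembers i i' j j' = SqMembers i' i j j' := by
  ext ⟨a, b⟩; simp only [SqMembers, Set.mem_insert_iff, Set.mem_singleton_iff]; tauto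

lemma mem_symm_j (i i' j j' : ℕ) : SqMembers i i' j j' = SqMembers i i' j' j := by
  ext ⟨a, b⟩; simp only [SqMembers, Set.mem_insert_iff, Set.mem_singleton_iff]; tauto

lemma key (h2A : ∀ c : Γ, {x : Fin n | A x = c}.ncard ≤ 2)
    (h2B : ∀ c : Γ, {x : Fin n | B x = c}.ncard ≤ 2)
    {i j i1' j1' i2' j2' : ℕ}
    (hS1 : IsConflictSquare n A B i i1' j j1')
    (hS2 : IsConflictSquare n A B (i + 1) i2' (j + 1) j2') :
    i2' = i1' + 1 ∧ j2' = j1' + 1 := by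
  obtain ⟨hii', hjj', vij, vij', vi'j, vi'j'⟩ := hS1
  obtain ⟨hii2, hjj2, wij, wij', wi'j, wi'j'⟩ := hS2
  obtain ⟨hi1, hj1, e1, e2⟩ := vij        -- A i = B j, A (i+1) = B (j+1)
  obtain ⟨hi2, hj2, e3, e4⟩ := vij'       -- A i = B j1', A (i+1) = B (j1'+1)
  obtain ⟨hi3, hj3, e5, e6⟩ := vi'j       -- A i1' = B j, A (i1'+1) = B (j+1)
  obtain ⟨hi4, hj4, f1, f2⟩ := wi'j       -- A i2' = B (j+1), ...
  obtain ⟨hi5, hj5, f3, f4⟩ := wij'       -- A (i+1) = B j2', ...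
  constructor
  · -- i2' determined by letter A (i+1) = B (j+1)
    set c := B ⟨j + 1, hj1⟩ with hc
    have ha : (⟨i + 1, hi1⟩ : Fin n) ∈ {x : Fin n | A x = c} := e2
    have hb : (⟨i1' + 1, hi3⟩ : Fin n) ∈ {x : Fin n | A x = c} := e6
    have hcmem : (⟨i2', Nat.lt_of_succ_lt hi4⟩ : Fin n) ∈ {x : Fin n | A x = c} := f1
    have hab : (⟨i + 1, hi1⟩ : Fin n) ≠ ⟨i1' + 1, hi3⟩ := by
      simp only [ne_eq, Fin.mk.injEq]; omega
    rcases three_le ha hb hcmem hab (h2A c) with h | h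
    · exact absurd (Fin.mk.injEq .. ▸ h : i2' = i + 1).symm hii2
    · exact (Fin.mk.injEq .. ▸ h : i2' = i1' + 1)
  · -- j2' determined by letter A (i+1)
    set d := A ⟨i + 1, hi1⟩ with hd
    have ha : (⟨j + 1, hj1⟩ : Fin n) ∈ {x : Fin n | B x = d} := e2.symm
    have hb : (⟨j1' + 1, hj2⟩ : Fin n) ∈ {x : Fin n | B x = d} := e4.symm
    have hcmem : (⟨j2', Nat.lt_of_succ_lt hj5⟩ : Fin n) ∈ {x : Fin n | B x = d} := f3.symm
    have hab : (⟨j + 1, hj1⟩ : Fin n) ≠ ⟨j1' + 1, hj2⟩ := by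
      simp only [ne_eq, Fin.mk.injEq]; omega
    rcases three_le ha hb hcmem hab (h2B d) with h | h
    · exact absurd (Fin.mk.injEq .. ▸ h : j2' = j + 1).symm hjj2
    · exact (Fin.mk.injEq .. ▸ h : j2' = j1' + 1)

lemma final_form (h2A : ∀ c : Γ, {x : Fin n | A x = c}.ncard ≤ 2)
    (h2B : ∀ c : Γ, {x : Fin n | B x = c}.ncard ≤ 2)
    {i j i1' j1' i2' j2' : ℕ}
    (hS1 : IsConflictSquare n A B i i1' j j1')
    (hS2 : IsConflictSquare n A B (i + 1) i2' (j + 1) j2') :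
    SqMembers (i + 1) i2' (j + 1) j2' =
      (fun v : ℕ × ℕ => (v.1 + 1, v.2 + 1)) '' SqMembers i i1' j j1' := by
  obtain ⟨rfl, rfl⟩ := key h2A h2B hS1 hS2
  simp only [SqMembers, Set.image_insert_eq, Set.image_singleton]

end Aux

theorem stmt_11 {Γ : Type*} (n : ℕ) (hn : 2 ≤ n) (A B : Fin n → Γ)
    (σ : Equiv.Perm (Fin n)) (hB : B = A ∘ σ)
    (h2 : ∀ c : Γ, {x : Fin n | A x = c}.ncard ≤ 2)
    (i j : ℕ) (hv : IsVertex n A B i j) (hv' : IsVertex n A B (i + 1) (j + 1))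
    (i1 i1' j1 j1' i2 i2' j2 j2' : ℕ)
    (hS1 : IsConflictSquare n A B i1 i1' j1 j1')
    (hS2 : IsConflictSquare n A B i2 i2' j2 j2')
    (hm1 : (i, j) ∈ SqMembers i1 i1' j1 j1')
    (hm2 : (i + 1, j + 1) ∈ SqMembers i2 i2' j2 j2')
    (hdiff : SqMembers i1 i1' j1 j1' ≠ SqMembers i2 i2' j2 j2') :
    SqMembers i2 i2' j2 j2' =
      (fun v : ℕ × ℕ => (v.1 + 1, v.2 + 1)) '' SqMembers i1 i1' j1 j1' := by
  have h2B : ∀ c : Γ, {x : Fin n | B x = c}.ncard ≤ 2 := by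
    intro c
    have : σ '' {x : Fin n | B x = c} = {x : Fin n | A x = c} := by
      subst hB
      rw [show {x : Fin n | (A ∘ σ) x = c} = σ ⁻¹' {x : Fin n | A x = c} from rfl,
        Set.image_preimage_eq _ σ.surjective]
    rw [← Set.ncard_image_of_injective _ σ.injective, this]
    exact h2 c
  -- normalize S1 so that (i, j) is its first corner
  obtain ⟨X, Y, hS1', hE1⟩ : ∃ X Y, IsConflictSquare n A B i X j Y ∧
      SqMembers i1 i1' j1 j1' = SqMembers i X j Y := by
    simp only [SqMembers, Set.mem_insert_iff, Set.mem_singleton_iff, Prod.mk.injEq] at hm1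
    rcases hm1 with ⟨rfl, rfl⟩ | ⟨rfl, rfl⟩ | ⟨rfl, rfl⟩ | ⟨rfl, rfl⟩
    · exact ⟨i1', j1', hS1, rfl⟩
    · exact ⟨i1', j1, sq_symm_j hS1, mem_symm_j ..⟩
    · exact ⟨i1, j1', sq_symm_i hS1, mem_symm_i ..⟩
    · exact ⟨i1, j1, sq_symm_j (sq_symm_i hS1), (mem_symm_i ..).trans (mem_symm_j ..)⟩
  obtain ⟨X', Y', hS2', hE2⟩ : ∃ X' Y', IsConflictSquare n A B (i + 1) X' (j + 1) Y' ∧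
      SqMembers i2 i2' j2 j2' = SqMembers (i + 1) X' (j + 1) Y' := by
    simp only [SqMembers, Set.mem_insert_iff, Set.mem_singleton_iff, Prod.mk.injEq] at hm2
    rcases hm2 with ⟨h1, h2⟩ | ⟨h1, h2⟩ | ⟨h1, h2⟩ | ⟨h1, h2⟩ <;> subst h1 <;> subst h2
    · exact ⟨i2', j2', hS2, rfl⟩
    · exact ⟨i2', j2, sq_symm_j hS2, mem_symm_j ..⟩
    · exact ⟨i2, j2', sq_symm_i hS2, mem_symm_i ..⟩
    · exact ⟨i2, j2, sq_symm_j (sq_symm_i hS2), (mem_symm_i ..).trans (mem_symm_j ..)⟩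
  rw [hE1, hE2]
  exact final_form h2 h2B hS1' hS2'
end

section
/- Assume every letter occurs at most 2 times in A, and suppose there is a series of p consecutive squares starting at S(i,i';j,j') (p ≥ 1). Then: (1) for every q with 0 ≤ q ≤ p, the letters A(i+q), A(i'+q), B(j+q), B(j'+q) are all equal, so the substrings of A on positions [i, i+p] and [i', i'+p] and the substrings of B on positions [j, j+p] and [j', j'+p] are identical; and (2) these substrings do not overlap: |i' - i| > p and |j' - j| > p. -/
private lemma three_distinct {Γ : Type*} {n : ℕ} {A : Fin n → Γ}
    (h2 : ∀ c : Γ, {x : Fin n | A x = c}.ncard ≤ 2)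
    {a b c : Fin n} (hab : a ≠ b) (hac : a ≠ c) (hbc : b ≠ c)
    (e1 : A a = A b) (e2 : A a = A c) : False := by
  have hsub : ({a, b, c} : Set (Fin n)) ⊆ {x : Fin n | A x = A a} := by
    intro x hx
    rcases hx with rfl | rfl | rfl
    · rfl
    · exact e1.symm
    · exact e2.symm
  have h3 : ({a, b, c} : Set (Fin n)).ncard = 3 :=
    Set.ncard_eq_three.mpr ⟨a, b, c, hab, hac, hbc, rfl⟩
  have := Set.ncard_le_ncard hsub (Set.toFinite _)
  have := h2 (A a)
  omega

private lemma fin_mk_eq {n : ℕ} {x y : ℕ} (hx : x < n) (hy : y < n) (h : x = y) :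
    (⟨x, hx⟩ : Fin n) = ⟨y, hy⟩ := Fin.ext h

theorem stmt_12 {Γ : Type*} (n : ℕ) (hn : 2 ≤ n) (A B : Fin n → Γ)
    (σ : Equiv.Perm (Fin n)) (hB : B = A ∘ σ)
    (h2 : ∀ c : Γ, {x : Fin n | A x = c}.ncard ≤ 2)
    (i i' j j' p : ℕ) (hp : 1 ≤ p)
    (hser : ∀ q < p, IsConflictSquare n A B (i + q) (i' + q) (j + q) (j' + q)) :
    (∀ q ≤ p, ∃ (h1 : i + q < n) (h2 : i' + q < n) (h3 : j + q < n) (h4 : j' + q < n),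
        A ⟨i + q, h1⟩ = A ⟨i' + q, h2⟩ ∧
        A ⟨i + q, h1⟩ = B ⟨j + q, h3⟩ ∧
        A ⟨i + q, h1⟩ = B ⟨j' + q, h4⟩) ∧
    (p : ℤ) < |(i' : ℤ) - (i : ℤ)| ∧ (p : ℤ) < |(j' : ℤ) - (j : ℤ)| := by
  have key : ∀ q ≤ p, ∃ (h1 : i + q < n) (h2 : i' + q < n) (h3 : j + q < n) (h4 : j' + q < n),
      A ⟨i + q, h1⟩ = A ⟨i' + q, h2⟩ ∧
      A ⟨i + q, h1⟩ = B ⟨j + q, h3⟩ ∧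
      A ⟨i + q, h1⟩ = B ⟨j' + q, h4⟩ := by
    intro q hq
    rcases lt_or_eq_of_le hq with hq | rfl
    · obtain ⟨ne1, ne2, vij, vij', vi'j, vv⟩ := hser q hq
      obtain ⟨hi, hj, e1, f1⟩ := vij
      obtain ⟨hi0, hj', e1', f1'⟩ := vij'
      obtain ⟨hi', hj0, e2, f2⟩ := vi'j
      exact ⟨Nat.lt_of_succ_lt hi, Nat.lt_of_succ_lt hi', Nat.lt_of_succ_lt hj,
        Nat.lt_of_succ_lt hj', e1.trans e2.symm, e1, e1'⟩
    · obtain ⟨ne1, ne2, vij, vij', vi'j, vv⟩ := hser (q - 1) (by omega)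
      obtain ⟨hi, hj, g1x, e1⟩ := vij
      obtain ⟨hi0, hj', g1x', e1'⟩ := vij'
      obtain ⟨hi', hj0, g2x, e2⟩ := vi'j
      have h1 : i + q < n := by omega
      have h2' : i' + q < n := by omega
      have h3 : j + q < n := by omega
      have h4 : j' + q < n := by omega
      rw [fin_mk_eq hi h1 (by omega), fin_mk_eq hj h3 (by omega)] at e1
      rw [fin_mk_eq hi h1 (by omega), fin_mk_eq hj' h4 (by omega)] at e1'
      rw [fin_mk_eq hi' h2' (by omega), fin_mk_eq hj h3 (by omega)] at e2
      exact ⟨h1, h2', h3, h4, e1.trans e2.symm, e1, e1'⟩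
  refine ⟨key, ?_, ?_⟩
  · by_contra h
    have habs := abs_le.mp (not_lt.mp h)
    have hne : i ≠ i' := (hser 0 hp).1
    obtain ⟨g1, g2, g3, g4, eA0, u1, u2⟩ := key 0 (Nat.zero_le p)
    rcases lt_or_gt_of_ne hne with hlt | hlt
    · -- i < i', d = i' - i ≤ p
      have hd : i' - i ≤ p := by omega
      obtain ⟨k1, k2, k3, k4, eAd, w1, w2⟩ := key (i' - i) hd
      -- eAd : A ⟨i + (i'-i)⟩ = A ⟨i' + (i'-i)⟩, and i + (i'-i) = i'
      rw [fin_mk_eq k1 g2 (by omega)] at eAd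
      -- eAd : A ⟨i'+0⟩ = A ⟨i' + (i'-i)⟩
      refine three_distinct h2 (a := ⟨i' + 0, g2⟩) (b := ⟨i + 0, g1⟩)
        (c := ⟨i' + (i' - i), k2⟩) ?_ ?_ ?_ eA0.symm eAd
      · simp [Fin.ext_iff]; omega
      · simp [Fin.ext_iff]; omega
      · simp [Fin.ext_iff]; omega
    · -- i' < i, d = i - i' ≤ p
      have hd : i - i' ≤ p := by omega
      obtain ⟨k1, k2, k3, k4, eAd, w1, w2⟩ := key (i - i') hd
      rw [fin_mk_eq k2 g1 (by omega)] at eAd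
      -- eAd : A ⟨i + (i-i')⟩ = A ⟨i + 0⟩
      refine three_distinct h2 (a := ⟨i + 0, g1⟩) (b := ⟨i' + 0, g2⟩)
        (c := ⟨i + (i - i'), k1⟩) ?_ ?_ ?_ eA0 eAd.symm
      · simp [Fin.ext_iff]; omega
      · simp [Fin.ext_iff]; omega
      · simp [Fin.ext_iff]; omega
  · by_contra h
    have habs := abs_le.mp (not_lt.mp h)
    have hne : j ≠ j' := (hser 0 hp).2.1
    have keyB : ∀ q ≤ p, ∃ (h3 : j + q < n) (h4 : j' + q < n),
        B ⟨j + q, h3⟩ = B ⟨j' + q, h4⟩ := by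
      intro q hq
      obtain ⟨z1, z2, h3, h4, z5, e2, e3⟩ := key q hq
      exact ⟨h3, h4, e2.symm.trans e3⟩
    have three_distinct_B : ∀ {a b c : Fin n}, a ≠ b → a ≠ c → b ≠ c →
        B a = B b → B a = B c → False := by
      intro a b c hab hac hbc e1 e2
      subst hB
      exact three_distinct h2 (fun h => hab (σ.injective h))
        (fun h => hac (σ.injective h)) (fun h => hbc (σ.injective h)) e1 e2
    obtain ⟨g1, g2, eB0⟩ := keyB 0 (Nat.zero_le p)
    rcases lt_or_gt_of_ne hne with hlt | hlt
    · have hd : j' - j ≤ p := by omega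
      obtain ⟨k1, k2, eBd⟩ := keyB (j' - j) hd
      rw [fin_mk_eq k1 g2 (by omega)] at eBd
      refine three_distinct_B (a := ⟨j' + 0, g2⟩) (b := ⟨j + 0, g1⟩)
        (c := ⟨j' + (j' - j), k2⟩) ?_ ?_ ?_ eB0.symm eBd
      · simp [Fin.ext_iff]; omega
      · simp [Fin.ext_iff]; omega
      · simp [Fin.ext_iff]; omega
    · have hd : j - j' ≤ p := by omega
      obtain ⟨k1, k2, eBd⟩ := keyB (j - j') hd
      rw [fin_mk_eq k2 g1 (by omega)] at eBd
      refine three_distinct_B (a := ⟨j + 0, g1⟩) (b := ⟨j' + 0, g2⟩)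
        (c := ⟨j + (j - j'), k1⟩) ?_ ?_ ?_ eB0 eBd.symm
      · simp [Fin.ext_iff]; omega
      · simp [Fin.ext_iff]; omega
      · simp [Fin.ext_iff]; omega
end
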